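/- arXiv:2005.11448 — 14 statements merged into one kernel-verified Lean document; each statement's English description precedes it below -/
import Mathlib

section
/- For all real numbers a, b > 0 with a ≠ b and all v ∈ (0,1), the weighted logarithmic mean satisfies L_v(a,b) = (1−v)·L(a♯_v b, a) + v·L(a♯_v b, b), i.e. L_v(a,b) is the weighted arithmetic mean (with weight v) of L(a♯_v b, a) and L(a♯_v b, b). -/
/-- The logarithmic mean of two positive reals. -/
noncomputable def logMean (a b : ℝ) : ℝ :=
  if a = b then a else (b - a) / (Real.log b - Real.log a)

/-- The identric mean of two positive reals. -/
noncomputable def idMean (a b : ℝ) : ℝ :=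
  if a = b then a else Real.exp (-1) * (b ^ b / a ^ a) ^ (b - a)⁻¹

/-- The weighted arithmetic mean `a ∇_v b`. -/
def wArith (v a b : ℝ) : ℝ := (1 - v) * a + v * b

/-- The weighted geometric mean `a ♯_v b`. -/
noncomputable def wGeom (v a b : ℝ) : ℝ := a ^ (1 - v) * b ^ v

/-- The weighted harmonic mean `a !_v b`. -/
noncomputable def wHarm (v a b : ℝ) : ℝ := ((1 - v) / a + v / b)⁻¹

/-- The weighted logarithmic mean `L_v(a,b)` (for `a ≠ b`, `v ∈ (0,1)`). -/
noncomputable def wLog (v a b : ℝ) : ℝ :=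
  (1 / (Real.log a - Real.log b)) *
    (((1 - v) / v) * (a - a ^ (1 - v) * b ^ v) + (v / (1 - v)) * (a ^ (1 - v) * b ^ v - b))

/-- The weighted identric mean `I_v(a,b)` (for `a ≠ b`, `v ∈ (0,1)`). -/
noncomputable def wId (v a b : ℝ) : ℝ :=
  Real.exp (-1) * wArith v a b ^ ((1 - 2 * v) * wArith v a b / (v * (1 - v) * (b - a))) *
    (b ^ (v * b / (1 - v)) / a ^ ((1 - v) * a / v)) ^ (b - a)⁻¹

/-- `L_v(a,b)` is the `v`-weighted arithmetic mean of `L(a♯_v b, a)` and `L(a♯_v b, b)`. -/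
theorem wLog_eq_wArith_logMean (a b v : ℝ) (ha : 0 < a) (hb : 0 < b) (hab : a ≠ b)
    (hv : v ∈ Set.Ioo (0 : ℝ) 1) :
    wLog v a b = (1 - v) * logMean (wGeom v a b) a + v * logMean (wGeom v a b) b := by
  obtain ⟨hv0, hv1⟩ := hv
  have hv1' : 0 < 1 - v := by linarith
  set g := wGeom v a b with hg
  have hgpos : 0 < g := mul_pos (Real.rpow_pos_of_pos ha _) (Real.rpow_pos_of_pos hb _)
  have hlg : Real.log g = (1 - v) * Real.log a + v * Real.log b := by
    rw [hg, wGeom, Real.log_mul (ne_of_gt (Real.rpow_pos_of_pos ha _))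
      (ne_of_gt (Real.rpow_pos_of_pos hb _)), Real.log_rpow ha, Real.log_rpow hb]
  have hD : Real.log a - Real.log b ≠ 0 := by
    intro h
    exact hab (Real.log_injOn_pos (Set.mem_Ioi.mpr ha) (Set.mem_Ioi.mpr hb) (by linarith))
  have hga : g ≠ a := by
    intro h
    apply hD
    have := hlg
    rw [h] at this
    nlinarith
  have hgb : g ≠ b := by
    intro h
    apply hD
    have := hlg
    rw [h] at this
    nlinarith
  rw [logMean, logMean, if_neg hga, if_neg hgb, wLog]
  have h1 : Real.log a - Real.log g = v * (Real.log a - Real.log b) := by rw [hlg]; ring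
  have h2 : Real.log b - Real.log g = -((1 - v) * (Real.log a - Real.log b)) := by
    rw [hlg]; ring
  have hge : a ^ (1 - v) * b ^ v = g := by rw [hg, wGeom]
  rw [h1, h2, hge]
  field_simp
  ring
end

section
/- For all real numbers a, b > 0 with a ≠ b and all v ∈ (0,1), the weighted identric mean satisfies I_v(a,b) = (I(a∇_v b, a))^{1−v} · (I(a∇_v b, b))^{v}, i.e. I_v(a,b) is the weighted geometric mean (with weight v) of I(a∇_v b, a) and I(a∇_v b, b). -/
set_option maxHeartbeats 1000000 in
/-- `I_v(a,b)` is the `v`-weighted geometric mean of `I(a∇_v b, a)` and `I(a∇_v b, b)`. -/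
theorem wId_eq_wGeom_idMean (a b v : ℝ) (ha : 0 < a) (hb : 0 < b) (hab : a ≠ b)
    (hv : v ∈ Set.Ioo (0 : ℝ) 1) :
    wId v a b = idMean (wArith v a b) a ^ (1 - v) * idMean (wArith v a b) b ^ v := by
  obtain ⟨hv0, hv1⟩ := hv
  have hv1' : (0:ℝ) < 1 - v := by linarith
  have hm : 0 < wArith v a b := by
    unfold wArith; positivity
  have hba : b - a ≠ 0 := sub_ne_zero.mpr (Ne.symm hab)
  have hma : wArith v a b ≠ a := by
    unfold wArith; intro h
    apply hab
    have : v * b = v * a := by linarith [h]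
    have := mul_left_cancel₀ (ne_of_gt hv0) this
    linarith
  have hmb : wArith v a b ≠ b := by
    unfold wArith; intro h
    apply hab
    have : (1-v) * a = (1-v) * b := by linarith [h]
    have := mul_left_cancel₀ (ne_of_gt hv1') this
    linarith
  have ham : a - wArith v a b ≠ 0 := fun h => hma (sub_eq_zero.mp h).symm
  have hbm : b - wArith v a b ≠ 0 := fun h => hmb (sub_eq_zero.mp h).symm
  rw [idMean, idMean, if_neg hma, if_neg hmb]
  have key : ∀ x y : ℝ, 0 < x → x ^ y = Real.exp (y * Real.log x) := fun x y hx => by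
    rw [Real.rpow_def_of_pos hx]; ring_nf
  rw [wId]
  simp only [Real.rpow_def_of_pos hm, Real.rpow_def_of_pos ha, Real.rpow_def_of_pos hb]
  rw [key _ _ (show (0:ℝ) < Real.exp (Real.log b * (v * b / (1-v))) / Real.exp (Real.log a * ((1-v)*a/v)) by positivity),
    key _ _ (show (0:ℝ) < Real.exp (Real.log a * a) / Real.exp (Real.log (wArith v a b) * wArith v a b) by positivity),
    key _ _ (show (0:ℝ) < Real.exp (Real.log b * b) / Real.exp (Real.log (wArith v a b) * wArith v a b) by positivity)]
  rw [key _ (1-v) (by positivity), key _ v (by positivity)]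
  simp only [Real.log_div (Real.exp_ne_zero _) (Real.exp_ne_zero _), Real.log_exp,
    Real.log_mul (Real.exp_ne_zero _) (Real.exp_ne_zero _), ← Real.exp_add]
  congr 1
  rw [show a - wArith v a b = v * (a - b) by unfold wArith; ring,
      show b - wArith v a b = (1 - v) * (b - a) by unfold wArith; ring]
  have hab' : a - b ≠ 0 := sub_ne_zero.mpr hab
  field_simp
  ring
end

section
/- For all real numbers a, b > 0 with a ≠ b and all v ∈ (0,1), one has a♯_v b ≤ (1−v)·(a♯_{v/2} b) + v·(a♯_{(1+v)/2} b) ≤ L_v(a,b). -/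
open Real

lemma wGeom_exp_exp (w x y : ℝ) : wGeom w (exp x) (exp y) = exp ((1 - w) * x + w * y) := by
  rw [wGeom, ← exp_mul, ← exp_mul, ← exp_add]
  ring_nf

lemma exp_midpoint_le_slope {p q : ℝ} (h : p ≠ q) : exp ((p + q) / 2) ≤ slope exp q p := by
  wlog hqp : q < p generalizing p q
  · rw [slope_comm, add_comm]
    exact this h.symm (lt_of_le_of_ne (not_lt.1 hqp) h)
  have hd : 0 ≤ (p - q) / 2 := by linarith
  have hsplit : exp p - exp q = exp ((p + q) / 2) * (2 * sinh ((p - q) / 2)) := by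
    rw [sinh_eq, mul_div_cancel₀ _ two_ne_zero, mul_sub, ← exp_add, ← exp_add]
    ring_nf
  rw [slope_def_field, hsplit, le_div_iff₀ (sub_pos.2 hqp)]
  gcongr
  linarith [self_le_sinh_iff.2 hd]

lemma wLog_exp_exp {v x y : ℝ} (hv0 : v ≠ 0) (hv1 : v ≠ 1) (hxy : x ≠ y) :
    wLog v (exp x) (exp y) =
      (1 - v) * slope exp ((1 - v) * x + v * y) x + v * slope exp y ((1 - v) * x + v * y) := by
  have hxy' : x - y ≠ 0 := sub_ne_zero.2 hxy
  have hv1' : 1 - v ≠ 0 := sub_ne_zero.2 hv1.symm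
  rw [wLog, ← wGeom, wGeom_exp_exp, log_exp, log_exp, slope_def_field, slope_def_field,
    show x - ((1 - v) * x + v * y) = v * (x - y) by ring,
    show (1 - v) * x + v * y - y = (1 - v) * (x - y) by ring]
  field_simp

/-- `a♯_v b ≤ (1−v)(a♯_{v/2} b) + v(a♯_{(1+v)/2} b) ≤ L_v(a,b)`. -/
theorem wGeom_le_wLog_refinement (a b v : ℝ) (ha : 0 < a) (hb : 0 < b) (hab : a ≠ b)
    (hv : v ∈ Set.Ioo (0 : ℝ) 1) :
    wGeom v a b ≤ (1 - v) * wGeom (v / 2) a b + v * wGeom ((1 + v) / 2) a b ∧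
      (1 - v) * wGeom (v / 2) a b + v * wGeom ((1 + v) / 2) a b ≤ wLog v a b := by
  obtain ⟨hv0, hv1⟩ := hv
  obtain ⟨x, rfl⟩ : ∃ x, exp x = a := ⟨log a, exp_log ha⟩
  obtain ⟨y, rfl⟩ : ∃ y, exp y = b := ⟨log b, exp_log hb⟩
  have hxy : x ≠ y := fun h => hab (h ▸ rfl)
  set g := (1 - v) * x + v * y with hg
  rw [wLog_exp_exp hv0.ne' hv1.ne hxy, wGeom_exp_exp, wGeom_exp_exp, wGeom_exp_exp, ← hg,
    show (1 - v / 2) * x + v / 2 * y = (x + g) / 2 by rw [hg]; ring,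
    show (1 - (1 + v) / 2) * x + (1 + v) / 2 * y = (g + y) / 2 by rw [hg]; ring]
  constructor
  · have hg_comb : (1 - v) • ((x + g) / 2) + v • ((g + y) / 2) = g := by
      simp only [smul_eq_mul, hg]; ring
    have := convexOn_exp.2 (Set.mem_univ ((x + g) / 2)) (Set.mem_univ ((g + y) / 2))
      (sub_nonneg.2 hv1.le) hv0.le (sub_add_cancel 1 v)
    rwa [hg_comb, smul_eq_mul, smul_eq_mul] at this
  · have hxg : x ≠ g := by intro h; apply hxy; nlinarith
    have hgy : g ≠ y := by intro h; apply hxy; nlinarith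
    gcongr
    exacts [exp_midpoint_le_slope hxg, exp_midpoint_le_slope hgy]
end

section
/- For all real numbers a, b > 0 with a ≠ b and all v ∈ (0,1), one has L_v(a,b) ≤ ((a♯_v b) + (a∇_v b))/2 ≤ a∇_v b. -/
open Real

/-- The first term of `log (1 + u) - log (1 - u) = 2 ∑ u ^ (2k+1) / (2k+1)`. -/
lemma two_mul_le_log_one_add_sub_log_one_sub {u : ℝ} (hu₀ : 0 ≤ u) (hu₁ : u < 1) :
    2 * u ≤ log (1 + u) - log (1 - u) := by
  have hsum := hasSum_log_sub_log_of_abs_lt_one (abs_lt.mpr ⟨by linarith, hu₁⟩)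
  simpa using le_hasSum hsum 0 fun k _ => by positivity

lemma two_mul_sub_div_add_le_log_sub_log {x y : ℝ} (hy : 0 < y) (hyx : y ≤ x) :
    2 * ((x - y) / (x + y)) ≤ log x - log y := by
  have hxy : 0 < x + y := by linarith
  have hu₁ : (x - y) / (x + y) < 1 := (div_lt_one hxy).mpr (by linarith)
  have hlog : log (1 + (x - y) / (x + y)) - log (1 - (x - y) / (x + y)) = log x - log y := by
    have h₁ : 1 + (x - y) / (x + y) = x * (2 / (x + y)) := by field_simp; ring
    have h₂ : 1 - (x - y) / (x + y) = y * (2 / (x + y)) := by field_simp; ring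
    rw [h₁, h₂, log_mul (by linarith) (by positivity), log_mul hy.ne' (by positivity)]
    ring
  rw [← hlog]
  exact two_mul_le_log_one_add_sub_log_one_sub (div_nonneg (by linarith) hxy.le) hu₁

lemma logMean_comm (a b : ℝ) : logMean a b = logMean b a := by
  by_cases h : a = b
  · rw [h]
  · rw [logMean, logMean, if_neg h, if_neg (Ne.symm h), ← neg_sub b a, ← neg_sub (log b) (log a),
      neg_div_neg_eq]

lemma logMean_le_arith_mean {a b : ℝ} (ha : 0 < a) (hb : 0 < b) : logMean a b ≤ (a + b) / 2 := by
  wlog hab : a ≤ b generalizing a b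
  · rw [logMean_comm, add_comm]
    exact this hb ha (le_of_not_ge hab)
  unfold logMean
  split_ifs with h
  · linarith
  have hlt : a < b := lt_of_le_of_ne hab h
  have hlog : 0 < log b - log a := sub_pos.mpr (log_lt_log ha hlt)
  have hbound := two_mul_sub_div_add_le_log_sub_log ha hab
  rw [div_le_iff₀ hlog]
  rw [mul_div_assoc', div_le_iff₀ (by linarith)] at hbound
  linarith

lemma log_wGeom {a b : ℝ} (ha : 0 < a) (hb : 0 < b) (v : ℝ) :
    log (wGeom v a b) = (1 - v) * log a + v * log b := by
  rw [wGeom, log_mul (rpow_pos_of_pos ha _).ne' (rpow_pos_of_pos hb _).ne', log_rpow ha,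
    log_rpow hb]

lemma wLog_eq_logMean_add_logMean {a b v : ℝ} (ha : 0 < a) (hb : 0 < b) (hab : a ≠ b)
    (hv : v ∈ Set.Ioo (0 : ℝ) 1) :
    wLog v a b = (1 - v) * logMean a (wGeom v a b) + v * logMean (wGeom v a b) b := by
  obtain ⟨hv₀, hv₁⟩ := hv
  set g := wGeom v a b
  have hD : log a - log b ≠ 0 := sub_ne_zero.mpr fun h => hab (log_injOn_pos ha hb h)
  have hlog_ag : log g - log a = -v * (log a - log b) := by rw [log_wGeom ha hb]; ring
  have hlog_gb : log b - log g = -(1 - v) * (log a - log b) := by rw [log_wGeom ha hb]; ring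
  have h1v : 1 - v ≠ 0 := by linarith
  have hag : a ≠ g := fun h => by
    rw [← h, sub_self, zero_eq_mul, neg_eq_zero] at hlog_ag
    exact hlog_ag.elim hv₀.ne' hD
  have hgb : g ≠ b := fun h => by
    rw [h, sub_self, zero_eq_mul, neg_eq_zero] at hlog_gb
    exact hlog_gb.elim h1v hD
  rw [logMean, logMean, if_neg hag, if_neg hgb, hlog_ag, hlog_gb, wLog, ← wGeom]
  field_simp
  ring

lemma wGeom_le_wArith {a b v : ℝ} (ha : 0 ≤ a) (hb : 0 ≤ b) (hv₀ : 0 ≤ v) (hv₁ : v ≤ 1) :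
    wGeom v a b ≤ wArith v a b :=
  geom_mean_le_arith_mean2_weighted (by linarith) hv₀ ha hb (by ring)

/-- `L_v(a,b) ≤ ((a♯_v b) + (a∇_v b))/2 ≤ a∇_v b`. -/
theorem wLog_le_wArith_refinement (a b v : ℝ) (ha : 0 < a) (hb : 0 < b) (hab : a ≠ b)
    (hv : v ∈ Set.Ioo (0 : ℝ) 1) :
    wLog v a b ≤ (wGeom v a b + wArith v a b) / 2 ∧
      (wGeom v a b + wArith v a b) / 2 ≤ wArith v a b := by
  have hg : 0 < wGeom v a b := mul_pos (rpow_pos_of_pos ha _) (rpow_pos_of_pos hb _)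
  have hGA := wGeom_le_wArith ha.le hb.le hv.1.le hv.2.le
  refine ⟨?_, by linarith⟩
  calc wLog v a b
      = (1 - v) * logMean a (wGeom v a b) + v * logMean (wGeom v a b) b :=
        wLog_eq_logMean_add_logMean ha hb hab hv
    _ ≤ (1 - v) * ((a + wGeom v a b) / 2) + v * ((wGeom v a b + b) / 2) := by
        have hv₁ : 0 ≤ 1 - v := by linarith [hv.2]
        exact add_le_add (mul_le_mul_of_nonneg_left (logMean_le_arith_mean ha hg) hv₁)
          (mul_le_mul_of_nonneg_left (logMean_le_arith_mean hg hb) hv.1.le)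
    _ = (wGeom v a b + wArith v a b) / 2 := by rw [wArith]; ring
end

section
/- For all real numbers a, b > 0 with a ≠ b and all v ∈ (0,1), one has I_v(a,b) ≤ (a∇_{v/2} b)^{1−v}·(a∇_{(1+v)/2} b)^{v} ≤ a∇_v b. -/
/-!
`I_v(a,b)` is the weighted geometric mean `I(a,m)^{1-v} I(m,b)^v` of two unweighted identric
means, where `m = a∇_v b`. Since `log I(x,y)` is the mean value of `log` over `[x,y]`, the
Hermite–Hadamard inequality for the concave function `log` gives `I(x,y) ≤ (x+y)/2`; and
`(a+m)/2 = a∇_{v/2} b`, `(m+b)/2 = a∇_{(1+v)/2} b`. The second inequality is weighted AM–GM,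
as `(1-v)·a∇_{v/2} b + v·a∇_{(1+v)/2} b = a∇_v b`.
-/

open Real intervalIntegral MeasureTheory

theorem ConcaveOn.intervalIntegral_le_mul_midpoint {f : ℝ → ℝ} {x y : ℝ} (hxy : x ≤ y)
    (hf : ConcaveOn ℝ (Set.Icc x y) f) (hfi : IntervalIntegrable f volume x y) :
    ∫ t in x..y, f t ≤ (y - x) * f ((x + y) / 2) := by
  have hreflect : ∫ t in x..y, f (x + y - t) = ∫ t in x..y, f t := by simp
  have hfi' : IntervalIntegrable (fun t ↦ f (x + y - t)) volume x y := by
    simpa using (hfi.comp_sub_left (x + y)).symm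
  have hpair : ∀ t ∈ Set.Icc x y, f t + f (x + y - t) ≤ 2 * f ((x + y) / 2) := by
    intro t ht
    have ht' : x + y - t ∈ Set.Icc x y := ⟨by linarith [ht.2], by linarith [ht.1]⟩
    have := hf.2 ht ht' (by norm_num : (0 : ℝ) ≤ 1 / 2) (by norm_num : (0 : ℝ) ≤ 1 / 2)
      (by norm_num)
    rw [smul_eq_mul, smul_eq_mul, smul_eq_mul, smul_eq_mul,
      show 1 / 2 * t + 1 / 2 * (x + y - t) = (x + y) / 2 by ring] at this
    linarith
  have := integral_mono_on hxy (hfi.add hfi') intervalIntegrable_const hpair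
  rw [integral_add hfi hfi', hreflect, intervalIntegral.integral_const, smul_eq_mul] at this
  linarith

theorem average_log_le_log_midpoint {x y : ℝ} (hx : 0 < x) (hy : 0 < y) (hxy : x ≠ y) :
    (∫ t in x..y, log t) / (y - x) ≤ log ((x + y) / 2) := by
  wlog hlt : x < y generalizing x y
  · have := this hy hx hxy.symm (lt_of_le_of_ne (not_lt.1 hlt) hxy.symm)
    rwa [integral_symm, ← neg_div_neg_eq, neg_neg, neg_sub, add_comm]
  rw [div_le_iff₀ (sub_pos.2 hlt), mul_comm]
  exact (strictConcaveOn_log_Ioi.concaveOn.subset (fun t ht ↦ hx.trans_le ht.1)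
    (convex_Icc x y)).intervalIntegral_le_mul_midpoint hlt.le intervalIntegrable_log'

theorem idMean_pos {x y : ℝ} (hx : 0 < x) (hy : 0 < y) : 0 < idMean x y := by
  unfold idMean; split_ifs <;> positivity

theorem log_idMean {x y : ℝ} (hx : 0 < x) (hy : 0 < y) (hxy : x ≠ y) :
    log (idMean x y) = (y * log y - x * log x) / (y - x) - 1 := by
  rw [idMean, if_neg hxy, log_mul (by positivity) (by positivity), log_exp,
    log_rpow (by positivity), log_div (by positivity) (by positivity), log_rpow hy, log_rpow hx]
  ring

theorem idMean_le_midpoint {x y : ℝ} (hx : 0 < x) (hy : 0 < y) : idMean x y ≤ (x + y) / 2 := by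
  rcases eq_or_ne x y with rfl | hxy
  · simp [idMean]
  rw [← log_le_log_iff (idMean_pos hx hy) (by positivity), log_idMean hx hy hxy]
  have hsub : y - x ≠ 0 := sub_ne_zero.2 hxy.symm
  calc (y * log y - x * log x) / (y - x) - 1 = (∫ t in x..y, log t) / (y - x) := by
        rw [integral_log]; field_simp; ring
    _ ≤ log ((x + y) / 2) := average_log_le_log_midpoint hx hy hxy

theorem wArith_pos {v a b : ℝ} (ha : 0 < a) (hb : 0 < b) (hv0 : 0 ≤ v) (hv1 : v ≤ 1) :
    0 < wArith v a b := by
  unfold wArith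
  rcases hv0.eq_or_lt with rfl | hv0
  · simpa using ha
  · have : 0 ≤ 1 - v := by linarith
    positivity

theorem wArith_sub_left (v a b : ℝ) : wArith v a b - a = v * (b - a) := by unfold wArith; ring

theorem sub_wArith (v a b : ℝ) : b - wArith v a b = (1 - v) * (b - a) := by unfold wArith; ring

theorem wId_eq_idMean_rpow_mul_idMean_rpow {v a b : ℝ} (ha : 0 < a) (hb : 0 < b) (hab : a ≠ b)
    (hv0 : 0 < v) (hv1 : v < 1) :
    wId v a b = idMean a (wArith v a b) ^ (1 - v) * idMean (wArith v a b) b ^ v := by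
  have hm := wArith_pos ha hb hv0.le hv1.le
  have hba : b - a ≠ 0 := sub_ne_zero.2 hab.symm
  have hma : a ≠ wArith v a b := by
    rw [← sub_ne_zero, ← neg_sub, neg_ne_zero, wArith_sub_left]; exact mul_ne_zero hv0.ne' hba
  have hbm : wArith v a b ≠ b := by
    rw [← sub_ne_zero, ← neg_sub, neg_ne_zero, sub_wArith]
    exact mul_ne_zero (sub_ne_zero.2 hv1.ne') hba
  have hI₁ := idMean_pos ha hm
  have hI₂ := idMean_pos hm hb
  apply log_injOn_pos (Set.mem_Ioi.2 (by unfold wId; positivity))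
    (Set.mem_Ioi.2 (mul_pos (rpow_pos_of_pos hI₁ _) (rpow_pos_of_pos hI₂ _)))
  rw [log_mul (rpow_pos_of_pos hI₁ _).ne' (rpow_pos_of_pos hI₂ _).ne', log_rpow hI₁,
    log_rpow hI₂, log_idMean ha hm hma, log_idMean hm hb hbm, wArith_sub_left, sub_wArith]
  unfold wId
  rw [log_mul (by positivity) (by positivity), log_mul (by positivity) (by positivity), log_exp,
    log_rpow hm, log_rpow (by positivity), log_div (by positivity) (by positivity), log_rpow hb,
    log_rpow ha]
  have : 1 - v ≠ 0 := sub_ne_zero.2 hv1.ne'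
  field_simp
  ring

/-- `I_v(a,b) ≤ (a∇_{v/2} b)^{1−v} (a∇_{(1+v)/2} b)^{v} ≤ a∇_v b`. -/
theorem wId_le_wArith_refinement (a b v : ℝ) (ha : 0 < a) (hb : 0 < b) (hab : a ≠ b)
    (hv : v ∈ Set.Ioo (0 : ℝ) 1) :
    wId v a b ≤ wArith (v / 2) a b ^ (1 - v) * wArith ((1 + v) / 2) a b ^ v ∧
      wArith (v / 2) a b ^ (1 - v) * wArith ((1 + v) / 2) a b ^ v ≤ wArith v a b := by
  obtain ⟨hv0, hv1⟩ := hv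
  have hm := wArith_pos ha hb hv0.le hv1.le
  have hleft : (a + wArith v a b) / 2 = wArith (v / 2) a b := by unfold wArith; ring
  have hright : (wArith v a b + b) / 2 = wArith ((1 + v) / 2) a b := by unfold wArith; ring
  constructor
  · rw [wId_eq_idMean_rpow_mul_idMean_rpow ha hb hab hv0 hv1, ← hleft, ← hright]
    have hI₁ := (idMean_pos ha hm).le
    have hI₂ := (idMean_pos hm hb).le
    have hle₁ := idMean_le_midpoint ha hm
    exact mul_le_mul (rpow_le_rpow hI₁ hle₁ (sub_nonneg.2 hv1.le))
      (rpow_le_rpow hI₂ (idMean_le_midpoint hm hb) hv0.le) (rpow_nonneg hI₂ _)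
      (rpow_nonneg (hI₁.trans hle₁) _)
  · calc _ ≤ (1 - v) * wArith (v / 2) a b + v * wArith ((1 + v) / 2) a b :=
          geom_mean_le_arith_mean2_weighted (sub_nonneg.2 hv1.le) hv0.le
            (wArith_pos ha hb (by linarith) (by linarith)).le
            (wArith_pos ha hb (by linarith) (by linarith)).le (by ring)
      _ = wArith v a b := by unfold wArith; ring
end

section
/- For every fixed real number a > 0, the function x ↦ L(a,x) is strictly concave on (0,∞). -/
/-! The logarithmic mean is the integral `L(a,x) = ∫₀¹ a^(1-t) x^t dt`, and for `0 < t < 1` the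
integrand is a positive multiple of the strictly concave power `x ↦ x^t`. -/

open Real Set intervalIntegral

lemma StrictConcaveOn.const_mul {E : Type*} [AddCommMonoid E] [Module ℝ E] {s : Set E}
    {f : E → ℝ} {c : ℝ} (hc : 0 < c) (hf : StrictConcaveOn ℝ s f) :
    StrictConcaveOn ℝ s fun x => c * f x := by
  refine ⟨hf.1, fun x hx y hy hxy p q hp hq hpq => ?_⟩
  have h := hf.2 hx hy hxy hp hq hpq
  simp only [smul_eq_mul] at h ⊢
  calc p * (c * f x) + q * (c * f y) = c * (p * f x + q * f y) := by ring
    _ < c * f (p • x + q • y) := mul_lt_mul_of_pos_left h hc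

/-- The concavity inequality is strict at one parameter, hence, by continuity in the parameter,
strict after integration. -/
theorem strictConcaveOn_intervalIntegral {E : Type*} [AddCommGroup E] [Module ℝ E]
    {s : Set E} {f : ℝ → E → ℝ} {a b : ℝ} (hab : a < b)
    (hcont : ∀ x ∈ s, ContinuousOn (f · x) (Icc a b))
    (hconc : ∀ t ∈ Ioc a b, ConcaveOn ℝ s (f t))
    (hstrict : ∃ t ∈ Icc a b, StrictConcaveOn ℝ s (f t)) :
    StrictConcaveOn ℝ s fun x => ∫ t in a..b, f t x := by
  obtain ⟨t₀, ht₀, hf₀⟩ := hstrict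
  refine ⟨hf₀.1, fun x hx y hy hxy p q hp hq hpq => ?_⟩
  have hint : ∀ z ∈ s, IntervalIntegrable (f · z) MeasureTheory.volume a b := fun z hz =>
    (hcont z hz).intervalIntegrable_of_Icc hab.le
  have hz : p • x + q • y ∈ s := hf₀.1 hx hy hp.le hq.le hpq
  simp only [smul_eq_mul]
  rw [← integral_const_mul, ← integral_const_mul,
    ← integral_add ((hint x hx).const_mul p) ((hint y hy).const_mul q)]
  refine integral_lt_integral_of_continuousOn_of_le_of_exists_lt hab
    (((hcont x hx).const_smul p).add ((hcont y hy).const_smul q)) (hcont _ hz)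
    (fun t ht => ?_) ⟨t₀, ht₀, hf₀.2 hx hy hxy hp hq hpq⟩
  exact (hconc t ht).2 hx hy hp.le hq.le hpq

lemma integral_rpow_one_sub_mul_rpow {a x : ℝ} (ha : 0 < a) (hx : 0 < x) :
    ∫ t in (0 : ℝ)..1, a ^ (1 - t) * x ^ t = logMean a x := by
  have hexp : ∀ t : ℝ, a ^ (1 - t) * x ^ t = exp ((log x - log a) * t + log a) := fun t => by
    rw [rpow_def_of_pos ha, rpow_def_of_pos hx, ← exp_add]
    ring_nf
  simp only [hexp, logMean]
  split_ifs with hax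
  · simp [hax, exp_log hx]
  · have hlog : log x - log a ≠ 0 :=
      sub_ne_zero.2 fun h => hax (log_injOn_pos ha hx h.symm)
    rw [integral_comp_mul_add (fun t => exp t) hlog, integral_exp]
    simp only [mul_zero, zero_add, mul_one, sub_add_cancel, exp_log ha, exp_log hx, smul_eq_mul]
    field_simp

/-- For fixed `a > 0`, the map `x ↦ L(a,x)` is strictly concave on `(0,∞)`. -/
theorem strictConcaveOn_logMean (a : ℝ) (ha : 0 < a) :
    StrictConcaveOn ℝ (Set.Ioi (0 : ℝ)) (fun x => logMean a x) := by
  refine (strictConcaveOn_intervalIntegral zero_lt_one (fun x (hx : 0 < x) => ?_)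
    (fun t ht => ?_) ⟨1 / 2, by norm_num, ?_⟩).congr
    fun x hx => integral_rpow_one_sub_mul_rpow ha hx
  · have hcont : Continuous fun t : ℝ => a ^ (1 - t) * x ^ t := by fun_prop (disch := positivity)
    exact hcont.continuousOn
  · exact ((concaveOn_rpow ht.1.le ht.2).subset Ioi_subset_Ici_self (convex_Ioi 0)).smul
      (rpow_nonneg ha.le _)
  · exact ((strictConcaveOn_rpow (by norm_num) (by norm_num)).subset Ioi_subset_Ici_self
      (convex_Ioi 0)).const_mul (rpow_pos_of_pos ha _)
end

section
/- For every fixed real number a > 0, the function x ↦ I(x,a) is strictly concave on (0,∞). -/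
/-!
Write `I(x, a) = exp (G x)` with `G = dslope (t ↦ t log t) a - 1`: off `a`, `G x` is the slope of
`t log t` between `a` and `x`, minus one, and `G a = log a`. This removes the case split at
`x = a`, and since `dslope` of an analytic function is analytic, `I(·, a)` is analytic on `(0, ∞)`.
For `x ≠ a`, `(e^G)'' = e^G (G'' + G'²)` with
`G'' + G'² = a (x a (log x - log a)² - (x - a)²) / (x (x - a)⁴)`, which is negative because the
logarithmic mean exceeds the geometric mean (equivalently `u < sinh u` for `u > 0`). A second
derivative that is negative off a single point still makes the derivative strictly decreasing.
-/

open Real Set Topology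

section DSlope

variable {𝕜 E : Type*} [NontriviallyNormedField 𝕜] [NormedAddCommGroup E] [NormedSpace 𝕜 E]
  {f : 𝕜 → E} {a : 𝕜} {s : Set 𝕜}

theorem AnalyticAt.dslope_same (hf : AnalyticAt 𝕜 f a) : AnalyticAt 𝕜 (dslope f a) a :=
  let ⟨_, hp⟩ := hf
  ⟨_, hp.has_fpower_series_dslope_fslope⟩

theorem AnalyticOnNhd.dslope (hf : AnalyticOnNhd 𝕜 f s) (ha : a ∈ s) :
    AnalyticOnNhd 𝕜 (dslope f a) s := by
  intro b hb
  rcases eq_or_ne b a with rfl | hba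
  · exact (hf b hb).dslope_same
  · refine AnalyticAt.congr ?_ (dslope_eventuallyEq_slope_of_ne f hba).symm
    simp only [slope_fun_def]
    exact ((analyticAt_id.sub analyticAt_const).inv (sub_ne_zero.2 hba)).smul
      ((hf b hb).sub analyticAt_const)

end DSlope

theorem strictConcaveOn_of_deriv2_neg_of_ne {D : Set ℝ} (hD : Convex ℝ D) {f : ℝ → ℝ} {c : ℝ}
    (hc : c ∈ interior D) (hf : ContinuousOn f D) (hf' : ContinuousOn (deriv f) (interior D))
    (hf'' : ∀ x ∈ interior D, x ≠ c → deriv^[2] f x < 0) : StrictConcaveOn ℝ D f := by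
  refine StrictAntiOn.strictConcaveOn_of_deriv hD hf ?_
  have hanti : ∀ t : Set ℝ, Convex ℝ t → c ∉ interior t →
      StrictAntiOn (deriv f) (interior D ∩ t) := by
    intro t ht hct
    refine strictAntiOn_of_deriv_neg (hD.interior.inter ht) (hf'.mono inter_subset_left) ?_
    intro x hx
    rw [interior_inter, interior_interior] at hx
    exact hf'' x hx.1 (ne_of_mem_of_not_mem hx.2 hct)
  have h := (hanti (Iic c) (convex_Iic c) (by simp)).union (hanti (Ici c) (convex_Ici c) (by simp))
    ⟨⟨hc, self_mem_Iic⟩, fun x hx => hx.2⟩ ⟨⟨hc, self_mem_Ici⟩, fun x hx => hx.2⟩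
  rwa [← inter_union_distrib_left, Iic_union_Ici, inter_univ] at h

theorem mul_mul_log_sub_sq_lt_sub_sq {x y : ℝ} (hx : 0 < x) (hy : 0 < y) (hxy : x ≠ y) :
    x * y * (log x - log y) ^ 2 < (x - y) ^ 2 := by
  set m := (log x + log y) / 2
  set u := (log x - log y) / 2
  have hu : u ≠ 0 := div_ne_zero (sub_ne_zero.2 fun h => hxy (log_injOn_pos hx hy h)) two_ne_zero
  have hsinh : u ^ 2 < sinh u ^ 2 :=
    sq_lt_sq.2 (by rw [abs_sinh]; exact self_lt_sinh_iff.2 (abs_pos.2 hu))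
  have hmul : x * y = exp m ^ 2 := by
    rw [sq, ← exp_add, show m + m = log x + log y by ring, exp_add, exp_log hx, exp_log hy]
  have hsub : x - y = 2 * exp m * sinh u := by
    have hx' : exp m * exp u = x := by rw [← exp_add, show m + u = log x by ring, exp_log hx]
    have hy' : exp m * exp (-u) = y := by rw [← exp_add, show m + -u = log y by ring, exp_log hy]
    rw [sinh_eq, ← hx', ← hy']
    ring
  calc x * y * (log x - log y) ^ 2 = 4 * exp m ^ 2 * u ^ 2 := by rw [← hmul]; ring
    _ < 4 * exp m ^ 2 * sinh u ^ 2 := by gcongr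
    _ = (x - y) ^ 2 := by rw [hsub]; ring

theorem idMean_eq_exp_dslope {a x : ℝ} (ha : 0 < a) (hx : 0 < x) :
    idMean x a = exp (dslope (fun t => t * log t) a x - 1) := by
  rcases eq_or_ne x a with rfl | hxa
  · rw [idMean, if_pos rfl, dslope_same, deriv_mul_log hx.ne', add_sub_cancel_right, exp_log hx]
  · rw [idMean, if_neg hxa, dslope_of_ne _ hxa, slope_def_field,
      rpow_def_of_pos (div_pos (rpow_pos_of_pos ha a) (rpow_pos_of_pos hx x)),
      log_div (rpow_pos_of_pos ha a).ne' (rpow_pos_of_pos hx x).ne', log_rpow ha, log_rpow hx,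
      ← exp_add]
    congr 1
    rw [div_eq_mul_inv, ← neg_sub a x, inv_neg]
    ring

theorem analyticOnNhd_exp_dslope_mul_log {a : ℝ} (ha : 0 < a) :
    AnalyticOnNhd ℝ (fun x => exp (dslope (fun t => t * log t) a x - 1)) (Ioi 0) := by
  have hmul_log : AnalyticOnNhd ℝ (fun t => t * log t) (Ioi 0) :=
    analyticOnNhd_id.mul analyticOnNhd_log
  exact ((hmul_log.dslope ha).sub analyticOnNhd_const).rexp

theorem hasDerivAt_dslope_mul_log {a y : ℝ} (hy : 0 < y) (hya : y ≠ a) :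
    HasDerivAt (dslope (fun t => t * log t) a)
      ((y - a - a * (log y - log a)) / (y - a) ^ 2) y := by
  have hslope : HasDerivAt (fun z => (z * log z - a * log a) / (z - a))
      (((log y + 1) * (y - a) - (y * log y - a * log a) * 1) / (y - a) ^ 2) y :=
    ((hasDerivAt_mul_log hy.ne').sub_const _).div ((hasDerivAt_id y).sub_const a)
      (sub_ne_zero.2 hya)
  refine (hslope.congr_of_eventuallyEq ?_).congr_deriv (by ring)
  filter_upwards [dslope_eventuallyEq_slope_of_ne (fun t : ℝ => t * log t) hya] with z hz
  rw [hz, slope_def_field]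

theorem deriv2_exp_dslope_mul_log_neg {a x : ℝ} (ha : 0 < a) (hx : 0 < x) (hxa : x ≠ a) :
    deriv^[2] (fun x => exp (dslope (fun t => t * log t) a x - 1)) x < 0 := by
  have hxa' : x - a ≠ 0 := sub_ne_zero.2 hxa
  set φ := fun x => exp (dslope (fun t => t * log t) a x - 1)
  set ψ := fun y => (y - a - a * (log y - log a)) / (y - a) ^ 2
  have hφ' : ∀ y, 0 < y → y ≠ a → HasDerivAt φ (φ y * ψ y) y := fun y hy hya =>
    ((hasDerivAt_dslope_mul_log hy hya).sub_const 1).exp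
  have hderiv : deriv φ =ᶠ[𝓝 x] fun y => φ y * ψ y := by
    filter_upwards [(isOpen_Ioi.inter isOpen_compl_singleton).mem_nhds ⟨hx, hxa⟩] with y hy
    exact (hφ' y hy.1 hy.2).deriv
  have hψ : HasDerivAt ψ
      (((1 - a * x⁻¹) * (x - a) ^ 2 - (x - a - a * (log x - log a)) * (2 * (x - a))) /
        ((x - a) ^ 2) ^ 2) x := by
    have hnum : HasDerivAt (fun y => y - a - a * (log y - log a)) (1 - a * x⁻¹) x := by
      simpa using ((hasDerivAt_id x).sub_const a).fun_sub
        (((hasDerivAt_log hx.ne').sub_const (log a)).const_mul a)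
    have hden : HasDerivAt (fun y => (y - a) ^ 2) (2 * (x - a)) x := by
      simpa using ((hasDerivAt_id x).sub_const a).fun_pow 2
    exact hnum.div hden (pow_ne_zero 2 hxa')
  have h2 := ((hφ' x hx hxa).mul hψ).congr_of_eventuallyEq hderiv
  have hkey := mul_mul_log_sub_sq_lt_sub_sq hx ha hxa
  rw [Function.iterate_succ_apply, Function.iterate_one, h2.deriv]
  have hsum : ψ x * ψ x + (((1 - a * x⁻¹) * (x - a) ^ 2 -
      (x - a - a * (log x - log a)) * (2 * (x - a))) / ((x - a) ^ 2) ^ 2) =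
      a * (x * a * (log x - log a) ^ 2 - (x - a) ^ 2) / (x * (x - a) ^ 4) := by
    simp only [ψ]
    field_simp
    ring
  calc _ = φ x * (a * (x * a * (log x - log a) ^ 2 - (x - a) ^ 2) / (x * (x - a) ^ 4)) := by
        rw [← hsum]; ring
    _ < 0 := mul_neg_of_pos_of_neg (exp_pos _) (div_neg_of_neg_of_pos
        (mul_neg_of_pos_of_neg ha (by linarith)) (mul_pos hx ((even_two_mul 2).pow_pos hxa')))

/-- For fixed `a > 0`, the map `x ↦ I(x,a)` is strictly concave on `(0,∞)`. -/
theorem strictConcaveOn_idMean (a : ℝ) (ha : 0 < a) :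
    StrictConcaveOn ℝ (Set.Ioi (0 : ℝ)) (fun x => idMean x a) := by
  have hφ := analyticOnNhd_exp_dslope_mul_log ha
  have hconcave := strictConcaveOn_of_deriv2_neg_of_ne (convex_Ioi 0) (c := a)
    (by rwa [interior_Ioi]) hφ.continuousOn (by rw [interior_Ioi]; exact hφ.deriv.continuousOn)
    (fun x hx hxa => deriv2_exp_dslope_mul_log_neg ha (interior_subset hx) hxa)
  exact hconcave.congr fun x hx => (idMean_eq_exp_dslope ha hx).symm
end

section
/- For all real numbers a, b > 0 with a ≠ b and all v ∈ (0,1), one has L_v(a,b) ≤ L(a♯_v b, a∇_v b) ≤ I(a♯_v b, a∇_v b) ≤ ((a♯_v b) + (a∇_v b))/2. -/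
/-! Put `G = a ♯_v b` and `A = a ∇_v b`. All three inequalities come from representing the means
as averages over `t ∈ [0, 1]`:
`L(x, y) = ∫ x^(1-t) y^t`, `1 / L(x, y) = ∫ 1 / ((1-t) x + t y)` and
`log I(x, y) = ∫ log ((1-t) x + t y)`.
Jensen's inequality for `exp`, applied to `± log ((1-t) G + t A)`, gives `I ≤ (G + A) / 2` and
`1 / I ≤ 1 / L`. For the first inequality, `log G` is the `v`-weighted mean of `log a` and `log b`,
which turns `L_v(a, b)` into `(1-v) L(G, a) + v L(G, b)`; since every `y ↦ y^t` with `t ∈ [0, 1]`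
is concave, so is `L(G, ·)`, and the combination is at most `L(G, A)`. -/

open Real Set intervalIntegral
open MeasureTheory (volume)

section Means

variable {x y : ℝ}

lemma logMean_eq_of_log_ne (h : log x ≠ log y) : logMean x y = (y - x) / (log y - log x) :=
  if_neg fun hxy => h (congrArg log hxy)

lemma one_sub_mul_add_mul_pos (hx : 0 < x) (hy : 0 < y) {t : ℝ} (ht : t ∈ uIcc (0 : ℝ) 1) :
    0 < (1 - t) * x + t * y := by
  rw [uIcc_of_le zero_le_one] at ht
  exact convex_Ioi (0 : ℝ) hx hy (sub_nonneg.2 ht.2) ht.1 (sub_add_cancel 1 t)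

lemma continuous_rpow_one_sub_mul_rpow (hx : 0 < x) (hy : 0 < y) :
    Continuous fun t : ℝ => x ^ (1 - t) * y ^ t := by
  fun_prop (disch := positivity)

lemma continuousOn_log_one_sub_mul_add_mul (hx : 0 < x) (hy : 0 < y) :
    ContinuousOn (fun t => log ((1 - t) * x + t * y)) (uIcc 0 1) :=
  ContinuousOn.log (by fun_prop) fun _ ht => (one_sub_mul_add_mul_pos hx hy ht).ne'

lemma integral_one_sub_mul_add_mul : ∫ t in (0 : ℝ)..1, ((1 - t) * x + t * y) = (x + y) / 2 := by
  have hline : ∀ t, (1 - t) * x + t * y = x + (y - x) * t := fun t => by ring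
  simp_rw [hline]
  rw [integral_add intervalIntegrable_const
      ((continuous_const_mul (y - x)).intervalIntegrable 0 1),
    integral_const, integral_const_mul, integral_id, smul_eq_mul]
  ring

lemma logMean_eq_integral (hx : 0 < x) (hy : 0 < y) :
    logMean x y = ∫ t in (0 : ℝ)..1, x ^ (1 - t) * y ^ t := by
  have hexp : ∀ t, x ^ (1 - t) * y ^ t = exp ((log y - log x) * t + log x) := fun t => by
    rw [rpow_def_of_pos hx, rpow_def_of_pos hy, ← exp_add]
    ring_nf
  simp_rw [hexp]
  by_cases h : log x = log y
  · obtain rfl := log_injOn_pos hx hy h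
    simp [logMean, exp_log hx]
  · rw [integral_comp_mul_add (fun t => exp t) (sub_ne_zero.2 (Ne.symm h)), mul_zero, zero_add,
      mul_one, sub_add_cancel, integral_exp, exp_log hx, exp_log hy, smul_eq_mul,
      logMean_eq_of_log_ne h, div_eq_inv_mul]

lemma inv_logMean_eq_integral (hx : 0 < x) (hy : 0 < y) :
    (logMean x y)⁻¹ = ∫ t in (0 : ℝ)..1, ((1 - t) * x + t * y)⁻¹ := by
  have hline : ∀ t, (1 - t) * x + t * y = (y - x) * t + x := fun t => by ring
  simp_rw [hline]
  rcases eq_or_ne x y with rfl | h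
  · simp [logMean]
  · rw [integral_comp_mul_add (fun t => t⁻¹) (sub_ne_zero.2 h.symm), mul_zero, zero_add,
      mul_one, sub_add_cancel, integral_inv_of_pos hx hy, log_div hy.ne' hx.ne', smul_eq_mul,
      logMean, if_neg h, inv_div, div_eq_inv_mul]

lemma idMean_eq_exp_integral (hx : 0 < x) (hy : 0 < y) :
    idMean x y = exp (∫ t in (0 : ℝ)..1, log ((1 - t) * x + t * y)) := by
  have hline : ∀ t, (1 - t) * x + t * y = (y - x) * t + x := fun t => by ring
  simp_rw [hline]
  rcases eq_or_ne x y with rfl | h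
  · simp [idMean, exp_log hx]
  · have hyx : y - x ≠ 0 := sub_ne_zero.2 h.symm
    rw [integral_comp_mul_add (fun t => log t) hyx, mul_zero, zero_add, mul_one, sub_add_cancel,
      integral_log, idMean, if_neg h, rpow_def_of_pos (by positivity),
      log_div (by positivity) (by positivity), log_rpow hy, log_rpow hx, ← exp_add, smul_eq_mul]
    congr 1
    field_simp
    ring

lemma exp_integral_le_integral_exp {f : ℝ → ℝ} (hf : ContinuousOn f (uIcc 0 1)) :
    exp (∫ t in (0 : ℝ)..1, f t) ≤ ∫ t in (0 : ℝ)..1, exp (f t) := by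
  set c := ∫ t in (0 : ℝ)..1, f t
  have tangent : ∀ t, exp c * (f t - c + 1) ≤ exp (f t) := fun t => by
    simpa only [← exp_add, add_sub_cancel] using
      mul_le_mul_of_nonneg_left (add_one_le_exp (f t - c)) (exp_pos c).le
  have hf_int : IntervalIntegrable f volume 0 1 := hf.intervalIntegrable
  have htangent_int : IntervalIntegrable (fun t => exp c * (f t - c + 1)) volume 0 1 :=
    ((hf_int.sub intervalIntegrable_const).add intervalIntegrable_const).const_mul _
  calc exp c = ∫ t in (0 : ℝ)..1, exp c * (f t - c + 1) := by
        rw [integral_const_mul, integral_add (hf_int.sub intervalIntegrable_const)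
          intervalIntegrable_const, integral_sub hf_int intervalIntegrable_const]
        simp [c]
    _ ≤ ∫ t in (0 : ℝ)..1, exp (f t) :=
        integral_mono_on zero_le_one htangent_int
          (continuous_exp.comp_continuousOn hf).intervalIntegrable fun t _ => tangent t

lemma idMean_le_add_div_two (hx : 0 < x) (hy : 0 < y) : idMean x y ≤ (x + y) / 2 :=
  calc idMean x y = exp (∫ t in (0 : ℝ)..1, log ((1 - t) * x + t * y)) :=
        idMean_eq_exp_integral hx hy
    _ ≤ ∫ t in (0 : ℝ)..1, exp (log ((1 - t) * x + t * y)) :=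
        exp_integral_le_integral_exp (continuousOn_log_one_sub_mul_add_mul hx hy)
    _ = ∫ t in (0 : ℝ)..1, ((1 - t) * x + t * y) :=
        integral_congr fun _ ht => exp_log (one_sub_mul_add_mul_pos hx hy ht)
    _ = (x + y) / 2 := integral_one_sub_mul_add_mul

lemma logMean_pos (hx : 0 < x) (hy : 0 < y) : 0 < logMean x y := by
  rw [logMean_eq_integral hx hy]
  exact intervalIntegral_pos_of_pos_on
    ((continuous_rpow_one_sub_mul_rpow hx hy).intervalIntegrable 0 1)
    (fun _ _ => by positivity) zero_lt_one

lemma logMean_le_idMean (hx : 0 < x) (hy : 0 < y) : logMean x y ≤ idMean x y := by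
  have hI : 0 < idMean x y := by
    rw [idMean_eq_exp_integral hx hy]
    exact exp_pos _
  refine (inv_le_inv₀ hI (logMean_pos hx hy)).1 ?_
  calc (idMean x y)⁻¹ = exp (∫ t in (0 : ℝ)..1, -log ((1 - t) * x + t * y)) := by
        rw [idMean_eq_exp_integral hx hy, integral_neg, exp_neg]
    _ ≤ ∫ t in (0 : ℝ)..1, exp (-log ((1 - t) * x + t * y)) :=
        exp_integral_le_integral_exp (continuousOn_log_one_sub_mul_add_mul hx hy).neg
    _ = ∫ t in (0 : ℝ)..1, ((1 - t) * x + t * y)⁻¹ :=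
        integral_congr fun _ ht => by rw [exp_neg, exp_log (one_sub_mul_add_mul_pos hx hy ht)]
    _ = (logMean x y)⁻¹ := (inv_logMean_eq_integral hx hy).symm

lemma concaveOn_logMean_right (hx : 0 < x) : ConcaveOn ℝ (Ioi 0) (logMean x) := by
  refine ⟨convex_Ioi 0, fun y hy z hz μ ν hμ hν hμν => ?_⟩
  have hyz : 0 < μ * y + ν * z := convex_Ioi 0 hy hz hμ hν hμν
  have hint : ∀ w : ℝ, 0 < w → IntervalIntegrable (fun t : ℝ => x ^ (1 - t) * w ^ t) volume 0 1 :=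
    fun w hw => (continuous_rpow_one_sub_mul_rpow hx hw).intervalIntegrable 0 1
  have hsum_int := ((hint y hy).const_mul μ).add ((hint z hz).const_mul ν)
  simp only [smul_eq_mul]
  rw [logMean_eq_integral hx hy, logMean_eq_integral hx hz, logMean_eq_integral hx hyz, ← integral_const_mul, ← integral_const_mul,
    ← integral_add ((hint y hy).const_mul μ) ((hint z hz).const_mul ν)]
  refine integral_mono_on zero_le_one hsum_int (hint _ hyz) fun t ht => ?_
  have hconc : μ * y ^ t + ν * z ^ t ≤ (μ * y + ν * z) ^ t :=
    (concaveOn_rpow ht.1 ht.2).2 (Ioi_subset_Ici_self hy) (Ioi_subset_Ici_self hz) hμ hν hμν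
  nlinarith [rpow_pos_of_pos hx (1 - t)]

end Means

lemma wLog_eq {a b v : ℝ} (ha : 0 < a) (hb : 0 < b) (hab : a ≠ b) (hv0 : 0 < v) (hv1 : v < 1) :
    wLog v a b = (1 - v) * logMean (wGeom v a b) a + v * logMean (wGeom v a b) b := by
  set G := wGeom v a b with hG
  have hlogG : log G = (1 - v) * log a + v * log b := by
    rw [hG, wGeom, log_mul (by positivity) (by positivity), log_rpow ha, log_rpow hb]
  have hlog : log a - log b ≠ 0 := sub_ne_zero.2 fun e => hab (log_injOn_pos ha hb e)
  have hv1' : 1 - v ≠ 0 := sub_ne_zero.2 hv1.ne'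
  have ha' : log a - log G = v * (log a - log b) := by rw [hlogG]; ring
  have hb' : log b - log G = -((1 - v) * (log a - log b)) := by rw [hlogG]; ring
  have hGa : log G ≠ log a := fun e => mul_ne_zero hv0.ne' hlog (by rw [← ha', e, sub_self])
  have hGb : log G ≠ log b := fun e => mul_ne_zero hv1' hlog (by
    rw [← neg_eq_zero, ← hb', e, sub_self])
  rw [logMean_eq_of_log_ne hGa, logMean_eq_of_log_ne hGb, ha', hb', wLog, ← wGeom, ← hG]
  field_simp
  ring

/-- `L_v(a,b) ≤ L(a♯_v b, a∇_v b) ≤ I(a♯_v b, a∇_v b) ≤ ((a♯_v b)+(a∇_v b))/2`. -/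
theorem wLog_le_logMean_le_idMean_le_arith (a b v : ℝ) (ha : 0 < a) (hb : 0 < b) (hab : a ≠ b)
    (hv : v ∈ Set.Ioo (0 : ℝ) 1) :
    wLog v a b ≤ logMean (wGeom v a b) (wArith v a b) ∧
      logMean (wGeom v a b) (wArith v a b) ≤ idMean (wGeom v a b) (wArith v a b) ∧
        idMean (wGeom v a b) (wArith v a b) ≤ (wGeom v a b + wArith v a b) / 2 := by
  obtain ⟨hv0, hv1⟩ := hv
  have hG : 0 < wGeom v a b := by unfold wGeom; positivity
  have hA : 0 < wArith v a b := add_pos (mul_pos (sub_pos.2 hv1) ha) (mul_pos hv0 hb)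
  refine ⟨?_, logMean_le_idMean hG hA, idMean_le_add_div_two hG hA⟩
  rw [wLog_eq ha hb hab hv0 hv1]
  exact (concaveOn_logMean_right hG).2 ha hb (sub_pos.2 hv1).le hv0.le (sub_add_cancel 1 v)
end

section
/- For all real numbers a, b > 0 with a ≠ b and all v ∈ (0,1), the dual weighted logarithmic mean satisfies L_v*(a,b) = L*(a♯_v b, a) !_v L*(a♯_v b, b), i.e. (L_v(a^{−1},b^{−1}))^{−1} equals the weighted harmonic mean, with weight v, of (L((a♯_v b)^{−1}, a^{−1}))^{−1} and (L((a♯_v b)^{−1}, b^{−1}))^{−1}. -/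
/-- The dual weighted logarithmic mean `L_v*(a,b)` is the `v`-weighted harmonic mean of
`L*(a♯_v b, a)` and `L*(a♯_v b, b)`. -/
theorem wLog_dual_eq_wHarm (a b v : ℝ) (ha : 0 < a) (hb : 0 < b) (hab : a ≠ b)
    (hv : v ∈ Set.Ioo (0 : ℝ) 1) :
    (wLog v a⁻¹ b⁻¹)⁻¹ =
      wHarm v (logMean (wGeom v a b)⁻¹ a⁻¹)⁻¹ (logMean (wGeom v a b)⁻¹ b⁻¹)⁻¹ := by
  obtain ⟨hv0, hv1⟩ := hv
  have hv1' : (0:ℝ) < 1 - v := by linarith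
  have hL : Real.log a ≠ Real.log b := fun h =>
    hab (Real.log_injOn_pos (Set.mem_Ioi.mpr ha) (Set.mem_Ioi.mpr hb) h)
  have hg : 0 < wGeom v a b := by unfold wGeom; positivity
  have hlg : Real.log (wGeom v a b) = (1 - v) * Real.log a + v * Real.log b := by
    unfold wGeom
    rw [Real.log_mul (by positivity) (by positivity), Real.log_rpow ha, Real.log_rpow hb]
  have hga : wGeom v a b ≠ a := by
    intro h
    have h1 := congrArg Real.log h
    rw [hlg] at h1
    exact hL (mul_left_cancel₀ (ne_of_gt hv0) (by linarith : v * Real.log b = v * Real.log a)).symm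
  have hgb : wGeom v a b ≠ b := by
    intro h
    have h1 := congrArg Real.log h
    rw [hlg] at h1
    exact hL (mul_left_cancel₀ (ne_of_gt hv1')
      (by linarith : (1 - v) * Real.log a = (1 - v) * Real.log b))
  have hga' : (wGeom v a b)⁻¹ ≠ a⁻¹ := fun h => hga (inv_injective h)
  have hgb' : (wGeom v a b)⁻¹ ≠ b⁻¹ := fun h => hgb (inv_injective h)
  have hinv : (a⁻¹) ^ (1 - v) * (b⁻¹) ^ v = (wGeom v a b)⁻¹ := by
    unfold wGeom
    rw [Real.inv_rpow ha.le, Real.inv_rpow hb.le, mul_inv]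
  unfold wLog wHarm
  rw [logMean, logMean, if_neg hga', if_neg hgb', hinv,
    Real.log_inv a, Real.log_inv b, Real.log_inv (wGeom v a b), hlg]
  have hLM : Real.log a - Real.log b ≠ 0 := sub_ne_zero.mpr hL
  have ha0 := ha.ne'
  have hb0 := hb.ne'
  have hg0 := hg.ne'
  have hv0' := hv0.ne'
  have hv1'' := hv1'.ne'
  have hd1 : -Real.log a - -((1 - v) * Real.log a + v * Real.log b) ≠ 0 := by
    intro h; apply hLM
    have : v * (Real.log a - Real.log b) = 0 := by linarith
    rcases mul_eq_zero.mp this with h | h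
    · exact absurd h hv0'
    · exact absurd h (by exact fun hh => hLM hh)
  have hd2 : -Real.log b - -((1 - v) * Real.log a + v * Real.log b) ≠ 0 := by
    intro h; apply hLM
    have : (1 - v) * (Real.log a - Real.log b) = 0 := by linarith
    rcases mul_eq_zero.mp this with h | h
    · exact absurd h hv1''
    · exact h
  have hd0 : -Real.log a - -Real.log b ≠ 0 := fun h => hLM (by linarith)
  simp only [div_eq_mul_inv, inv_inv]
  congr 1
  generalize Real.log a = L at *
  generalize Real.log b = M at *
  generalize wGeom v a b = G at *
  have hML : M - L ≠ 0 := fun h => hLM (by linarith)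
  have e1 : -L - -((1 - v) * L + v * M) = v * (M - L) := by ring
  have e2 : -M - -((1 - v) * L + v * M) = (1 - v) * (L - M) := by ring
  have e3 : -L - -M = M - L := by ring
  rw [e1, e2, e3]
  have d1 : v * (M - L) ≠ 0 := mul_ne_zero hv0' hML
  have d2 : (1 - v) * (L - M) ≠ 0 := mul_ne_zero hv1'' hLM
  field_simp
  ring
end

section
/- For all real numbers a, b > 0 with a ≠ b and all v ∈ (0,1), the dual weighted identric mean satisfies I_v*(a,b) = I*(a !_v b, a) ♯_v I*(a !_v b, b), i.e. (I_v(a^{−1},b^{−1}))^{−1} = ((I((a !_v b)^{−1}, a^{−1}))^{−1})^{1−v} · ((I((a !_v b)^{−1}, b^{−1}))^{−1})^{v}. -/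
/-- The dual weighted identric mean `I_v*(a,b)` is the `v`-weighted geometric mean of
`I*(a !_v b, a)` and `I*(a !_v b, b)`. -/
theorem wId_dual_eq_wGeom (a b v : ℝ) (ha : 0 < a) (hb : 0 < b) (hab : a ≠ b)
    (hv : v ∈ Set.Ioo (0 : ℝ) 1) :
    (wId v a⁻¹ b⁻¹)⁻¹ =
      ((idMean (wHarm v a b)⁻¹ a⁻¹)⁻¹) ^ (1 - v) * ((idMean (wHarm v a b)⁻¹ b⁻¹)⁻¹) ^ v := by
  obtain ⟨hv0, hv1⟩ := hv
  have hv1' : (0:ℝ) < 1 - v := by linarith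
  set x := a⁻¹ with hxdef
  set y := b⁻¹ with hydef
  have hx0 : 0 < x := by positivity
  have hy0 : 0 < y := by positivity
  have hxy : x ≠ y := fun h => hab (inv_injective h)
  set N := (1 - v) * x + v * y with hNdef
  have hHarm : (wHarm v a b)⁻¹ = N := by
    rw [wHarm, inv_inv, hNdef, div_eq_mul_inv, div_eq_mul_inv]
  rw [hHarm]
  clear_value N
  clear_value x y
  clear hxdef hydef ha hb hab
  subst hNdef
  have hN0 : 0 < (1 - v) * x + v * y := by positivity
  set N := (1 - v) * x + v * y with hNdef
  have hNx : N ≠ x := by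
    intro h
    apply hxy
    have h2 : v * (y - x) = 0 := by rw [hNdef] at h; nlinarith
    rcases mul_eq_zero.mp h2 with h' | h'
    · exact absurd h' (ne_of_gt hv0)
    · linarith [sub_eq_zero.mp h']
  have hNy : N ≠ y := by
    intro h
    apply hxy
    have h2 : (1 - v) * (x - y) = 0 := by rw [hNdef] at h; nlinarith
    rcases mul_eq_zero.mp h2 with h' | h'
    · exact absurd h' (ne_of_gt hv1')
    · exact sub_eq_zero.mp h'
  clear_value N
  have hyx : y - x ≠ 0 := sub_ne_zero.mpr (Ne.symm hxy)
  have hxN : x - N ≠ 0 := sub_ne_zero.mpr (Ne.symm hNx)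
  have hyN : y - N ≠ 0 := sub_ne_zero.mpr (Ne.symm hNy)
  have hId1 : idMean N x = Real.exp (-1) * (x ^ x / N ^ N) ^ (x - N)⁻¹ := if_neg hNx
  have hId2 : idMean N y = Real.exp (-1) * (y ^ y / N ^ N) ^ (y - N)⁻¹ := if_neg hNy
  have hwId : wId v x y =
      Real.exp (-1) * N ^ ((1 - 2 * v) * N / (v * (1 - v) * (y - x))) *
        (y ^ (v * y / (1 - v)) / x ^ ((1 - v) * x / v)) ^ (y - x)⁻¹ := by
    rw [wId, wArith, ← hNdef]
  have hP1 : 0 < idMean N x := by rw [hId1]; positivity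
  have hP2 : 0 < idMean N y := by rw [hId2]; positivity
  have hL0 : 0 < (wId v x y)⁻¹ := by rw [hwId]; positivity
  have hR0 : 0 < (idMean N x)⁻¹ ^ (1 - v) * (idMean N y)⁻¹ ^ v := by positivity
  have h1 : Real.log ((idMean N x)⁻¹) =
      1 - (x - N)⁻¹ * (x * Real.log x - N * Real.log N) := by
    rw [Real.log_inv, hId1, Real.log_mul (Real.exp_ne_zero _) (by positivity),
      Real.log_exp, Real.log_rpow (by positivity),
      Real.log_div (by positivity) (by positivity),
      Real.log_rpow hx0, Real.log_rpow hN0]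
    ring
  have h2 : Real.log ((idMean N y)⁻¹) =
      1 - (y - N)⁻¹ * (y * Real.log y - N * Real.log N) := by
    rw [Real.log_inv, hId2, Real.log_mul (Real.exp_ne_zero _) (by positivity),
      Real.log_exp, Real.log_rpow (by positivity),
      Real.log_div (by positivity) (by positivity),
      Real.log_rpow hy0, Real.log_rpow hN0]
    ring
  have hL : Real.log ((wId v x y)⁻¹) =
      1 - (1 - 2 * v) * N / (v * (1 - v) * (y - x)) * Real.log N
        - (y - x)⁻¹ * (v * y / (1 - v) * Real.log y - (1 - v) * x / v * Real.log x) := by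
    rw [Real.log_inv, hwId, Real.log_mul (by positivity) (by positivity),
      Real.log_mul (Real.exp_ne_zero _) (by positivity),
      Real.log_exp, Real.log_rpow hN0, Real.log_rpow (by positivity),
      Real.log_div (by positivity) (by positivity),
      Real.log_rpow hy0, Real.log_rpow hx0]
    ring
  have key : Real.log ((wId v x y)⁻¹) =
      Real.log ((idMean N x)⁻¹ ^ (1 - v) * (idMean N y)⁻¹ ^ v) := by
    rw [Real.log_mul (by positivity) (by positivity),
      Real.log_rpow (by positivity), Real.log_rpow (by positivity), h1, h2, hL]
    have hv0' : v ≠ 0 := ne_of_gt hv0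
    have hv1'' : (1 : ℝ) - v ≠ 0 := ne_of_gt hv1'
    have e1 : (x - N)⁻¹ = -(v⁻¹ * (y - x)⁻¹) := by
      rw [show x - N = -(v * (y - x)) by rw [hNdef]; ring, inv_neg, mul_inv]
    have e2 : (y - N)⁻¹ = (1 - v)⁻¹ * (y - x)⁻¹ := by
      rw [show y - N = (1 - v) * (y - x) by rw [hNdef]; ring, mul_inv]
    rw [e1, e2]
    field_simp
    ring
  exact Real.log_injOn_pos (Set.mem_Ioi.2 hL0) (Set.mem_Ioi.2 hR0) key
end

section
/- For all real numbers a, b > 0 with a ≠ b and all v ∈ (0,1), the weighted harmonic combination L(a∇_v b, a) !_v L(a∇_v b, b) equals the second weighted logarithmic mean ℒ_v(a,b) = (b−a) / [ ((1−2v)/(v(1−v)))·log(a∇_v b) + (v/(1−v))·log b − ((1−v)/v)·log a ]. -/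
/-- `L(a∇_v b, a) !_v L(a∇_v b, b)` equals the second weighted logarithmic mean `ℒ_v(a,b)`. -/
theorem wHarm_logMean_eq_secondWLog (a b v : ℝ) (ha : 0 < a) (hb : 0 < b) (hab : a ≠ b)
    (hv : v ∈ Set.Ioo (0 : ℝ) 1) :
    wHarm v (logMean (wArith v a b) a) (logMean (wArith v a b) b) =
      (b - a) /
        (((1 - 2 * v) / (v * (1 - v))) * Real.log (wArith v a b) +
          (v / (1 - v)) * Real.log b - ((1 - v) / v) * Real.log a) := by
  obtain ⟨hv0, hv1⟩ := hv
  have hv1' : (0:ℝ) < 1 - v := by linarith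
  set m := wArith v a b with hm
  have hmpos : 0 < m := by
    have : 0 < (1 - v) * a + v * b := by positivity
    simpa [hm, wArith] using this
  have hma : m - a = v * (b - a) := by simp [hm, wArith]; ring
  have hmb : m - b = (1 - v) * (a - b) := by simp [hm, wArith]; ring
  have hba : b - a ≠ 0 := sub_ne_zero.mpr (Ne.symm hab)
  have hmane : m ≠ a := by
    intro h; apply hba; have := hma; rw [h] at this; simp at this
    rcases this with h1|h1
    · exact absurd h1 hv0.ne'
    · linarith
  have hmbne : m ≠ b := by
    intro h; apply hba; have := hmb; rw [h] at this; simp at this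
    rcases this with h1|h1
    · linarith
    · linarith [sub_ne_zero.mpr hab, h1]
  have hlma : Real.log m - Real.log a ≠ 0 := by
    refine sub_ne_zero.mpr fun h => hmane ?_
    exact Real.log_injOn_pos (Set.mem_Ioi.mpr hmpos) (Set.mem_Ioi.mpr ha) h
  have hlmb : Real.log m - Real.log b ≠ 0 := by
    refine sub_ne_zero.mpr fun h => hmbne ?_
    exact Real.log_injOn_pos (Set.mem_Ioi.mpr hmpos) (Set.mem_Ioi.mpr hb) h
  have hX : (1 - v) / logMean m a + v / logMean m b =
      (((1 - 2 * v) / (v * (1 - v))) * Real.log m +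
        (v / (1 - v)) * Real.log b - ((1 - v) / v) * Real.log a) / (b - a) := by
    rw [logMean, logMean, if_neg hmane, if_neg hmbne]
    have ham : a - m ≠ 0 := by
      rw [show a - m = -(v * (b - a)) by linarith [hma]]
      simp [hv0.ne', hba]
    have hbm : b - m ≠ 0 := by
      rw [show b - m = -((1 - v) * (a - b)) by linarith [hmb]]
      simp [hv1'.ne', sub_ne_zero.mpr hab]
    rw [div_div_eq_mul_div, div_div_eq_mul_div]
    rw [show a - m = -(v * (b - a)) by linarith [hma],
        show b - m = -((1 - v) * (a - b)) by linarith [hmb]]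
    have h1 : -(v * (b - a)) ≠ 0 := by simp [hv0.ne', hba]
    have h2 : -((1 - v) * (a - b)) ≠ 0 := by simp [hv1'.ne', sub_ne_zero.mpr hab]
    rw [div_add_div _ _ h1 h2, div_eq_div_iff (mul_ne_zero h1 h2) hba]
    field_simp
    ring
  rw [wHarm, hX, inv_div]
end

section
/- For all real numbers a, b > 0 with a ≠ b and all v ∈ (0,1), the weighted arithmetic combination (1−v)·L*(a !_v b, a) + v·L*(a !_v b, b) equals the dual second weighted logarithmic mean ℒ_v*(a,b) = (ab/(b−a))·[ ((1−2v)/(v(1−v)))·log(a !_v b) + (v/(1−v))·log b − ((1−v)/v)·log a ]. -/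
/-- The dual of the logarithmic mean: `L*(a,b) = (L(a⁻¹,b⁻¹))⁻¹`. -/
noncomputable def logMeanDual (a b : ℝ) : ℝ := (logMean a⁻¹ b⁻¹)⁻¹

/-- `(1−v)·L*(a !_v b, a) + v·L*(a !_v b, b)` equals the dual second weighted
logarithmic mean `ℒ_v*(a,b)`. -/
theorem wArith_logMeanDual_eq_dualSecondWLog (a b v : ℝ) (ha : 0 < a) (hb : 0 < b) (hab : a ≠ b)
    (hv : v ∈ Set.Ioo (0 : ℝ) 1) :
    (1 - v) * logMeanDual (wHarm v a b) a + v * logMeanDual (wHarm v a b) b =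
      (a * b / (b - a)) *
        (((1 - 2 * v) / (v * (1 - v))) * Real.log (wHarm v a b) +
          (v / (1 - v)) * Real.log b - ((1 - v) / v) * Real.log a) := by
  obtain ⟨hv0, hv1⟩ := hv
  have ha' : a ≠ 0 := ha.ne'
  have hb' : b ≠ 0 := hb.ne'
  have hv' : v ≠ 0 := hv0.ne'
  have hv1' : (1 : ℝ) - v ≠ 0 := by linarith
  have hba : b - a ≠ 0 := sub_ne_zero.2 (Ne.symm hab)
  have hwinv : (wHarm v a b)⁻¹ = (1 - v) / a + v / b := by
    rw [wHarm, inv_inv]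
  have hda : a⁻¹ - (wHarm v a b)⁻¹ = v * (b - a) / (a * b) := by
    rw [hwinv]; field_simp; ring
  have hdb : b⁻¹ - (wHarm v a b)⁻¹ = -((1 - v) * (b - a)) / (a * b) := by
    rw [hwinv]; field_simp; ring
  have hna : (wHarm v a b)⁻¹ ≠ a⁻¹ := by
    intro h
    have : v * (b - a) / (a * b) = 0 := by rw [← hda, h, sub_self]
    have := div_eq_zero_iff.1 this
    rcases this with h' | h'
    · exact (mul_ne_zero hv' hba) h'
    · exact (mul_ne_zero ha' hb') h'
  have hnb : (wHarm v a b)⁻¹ ≠ b⁻¹ := by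
    intro h
    have : -((1 - v) * (b - a)) / (a * b) = 0 := by rw [← hdb, h, sub_self]
    have := div_eq_zero_iff.1 this
    rcases this with h' | h'
    · exact (mul_ne_zero hv1' hba) (by linarith [neg_eq_zero.1 h'])
    · exact (mul_ne_zero ha' hb') h'
  rw [logMeanDual, logMeanDual, logMean, logMean, if_neg hna, if_neg hnb,
    inv_div, inv_div, Real.log_inv, Real.log_inv, Real.log_inv, hda, hdb]
  generalize Real.log (wHarm v a b) = L
  rw [show -Real.log a - -L = L - Real.log a by ring,
      show -Real.log b - -L = L - Real.log b by ring]
  field_simp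
  ring
end

section
/- Let H be a complex Hilbert space and let A, B be positive invertible bounded operators on H. Then for every v ∈ (0,1), the weighted operator logarithmic mean satisfies L_v(A,B) = (1−v)·L(A♯_v B, A) + v·L(A♯_v B, B). -/
/-- Scalar weighted logarithmic mean `L_v(a,b)`, extended by `L_v(a,a) = a`. -/
noncomputable def wLogScalar (v a b : ℝ) : ℝ :=
  if a = b then a else
    (1 / (Real.log a - Real.log b)) *
      (((1 - v) / v) * (a - a ^ (1 - v) * b ^ v) + (v / (1 - v)) * (a ^ (1 - v) * b ^ v - b))

/-- Scalar weighted identric mean `I_v(a,b)`, extended by `I_v(a,a) = a`. -/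
noncomputable def wIdScalar (v a b : ℝ) : ℝ :=
  if a = b then a else
    Real.exp (-1) *
      ((1 - v) * a + v * b) ^
        ((1 - 2 * v) * ((1 - v) * a + v * b) / (v * (1 - v) * (b - a))) *
      (b ^ (v * b / (1 - v)) / a ^ ((1 - v) * a / v)) ^ (b - a)⁻¹

variable {H : Type*} [NormedAddCommGroup H] [InnerProductSpace ℂ H] [CompleteSpace H]

/-- The operator mean `m_f(A,B) = A^{1/2} f(A^{-1/2} B A^{-1/2}) A^{1/2}` associated to a
function `f : (0,∞) → ℝ` with `f(1) = 1`, via the continuous functional calculus. -/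
noncomputable def opMeanOf (f : ℝ → ℝ) (A B : H →L[ℂ] H) : H →L[ℂ] H :=
  cfc Real.sqrt A *
    cfc f (Ring.inverse (cfc Real.sqrt A) * B * Ring.inverse (cfc Real.sqrt A)) *
      cfc Real.sqrt A

/-- The weighted operator arithmetic mean `A ∇_v B = (1-v)A + vB`. -/
noncomputable def opWArith (v : ℝ) (A B : H →L[ℂ] H) : H →L[ℂ] H :=
  (1 - v : ℝ) • A + v • B

/-- The weighted operator geometric mean `A ♯_v B = A^{1/2}(A^{-1/2}BA^{-1/2})^v A^{1/2}`. -/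
noncomputable def opWGeom (v : ℝ) (A B : H →L[ℂ] H) : H →L[ℂ] H :=
  opMeanOf (fun x => x ^ v) A B

/-- The operator logarithmic mean, with representing function `f_L(x) = (x-1)/log x`. -/
noncomputable def opLog (A B : H →L[ℂ] H) : H →L[ℂ] H :=
  opMeanOf (fun x => if x = 1 then 1 else (x - 1) / Real.log x) A B

/-- The operator identric mean, with representing function `f_I(x) = e⁻¹ x^{x/(x-1)}`. -/
noncomputable def opId (A B : H →L[ℂ] H) : H →L[ℂ] H :=
  opMeanOf (fun x => if x = 1 then 1 else Real.exp (-1) * x ^ (x / (x - 1))) A B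

/-- The weighted operator logarithmic mean, with representing function `F_{L_v}(x) = L_v(1,x)`. -/
noncomputable def opWLog (v : ℝ) (A B : H →L[ℂ] H) : H →L[ℂ] H :=
  opMeanOf (fun x => wLogScalar v 1 x) A B

/-- The weighted operator identric mean, with representing function `F_{I_v}(x) = I_v(1,x)`. -/
noncomputable def opWId (v : ℝ) (A B : H →L[ℂ] H) : H →L[ℂ] H :=
  opMeanOf (fun x => wIdScalar v 1 x) A B

/-!
Put `S = A^{1/2}` and `X = S⁻¹ B S⁻¹`, so that `A = S S*`, `B = S X S*` and every mean
`m_f(A, B)` equals `S f(X) S*`. Writing `S P^{1/2} = (S P S*)^{1/2} U` with `U` unitary gives the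
transformer identity `m_f(S P S*, S R S*) = S m_f(P, R) S*`, and for commuting arguments
`m_f(g(X), h(X)) = (g · f(h / g))(X)`. Hence both sides of the theorem are `S φ(X) S*` for explicit
scalar functions `φ`, and the theorem reduces to the scalar identity
`L_v(1, t) = (1 - v) L(t^v, 1) + v L(t^v, t)`.
-/

open Ring Set

noncomputable def logMeanFun (x : ℝ) : ℝ := if x = 1 then 1 else (x - 1) / Real.log x

lemma dslope_log_one_ne_zero {x : ℝ} (hx : 0 < x) : dslope Real.log 1 x ≠ 0 := by
  rcases eq_or_ne x 1 with rfl | hx1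
  · simp [(Real.hasDerivAt_log one_ne_zero).deriv]
  · simp [dslope_of_ne _ hx1, slope_def_field, sub_ne_zero.2 hx1,
      Real.log_ne_zero_of_pos_of_ne_one hx hx1]

lemma logMeanFun_eq_inv_dslope {x : ℝ} (hx : 0 < x) : logMeanFun x = (dslope Real.log 1 x)⁻¹ := by
  rcases eq_or_ne x 1 with rfl | hx1
  · simp [logMeanFun, (Real.hasDerivAt_log one_ne_zero).deriv]
  · simp [logMeanFun, hx1, dslope_of_ne _ hx1, slope_def_field]

lemma continuousOn_logMeanFun : ContinuousOn logMeanFun (Ioi 0) := by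
  have hd : ContinuousOn (dslope Real.log 1) (Ioi 0) :=
    (continuousOn_dslope (Ioi_mem_nhds one_pos)).2
      ⟨Real.continuousOn_log.mono fun x hx => ne_of_gt hx, Real.differentiableAt_log one_ne_zero⟩
  exact (hd.inv₀ fun x hx => dslope_log_one_ne_zero hx).congr fun x hx =>
    logMeanFun_eq_inv_dslope hx

lemma mul_logMeanFun_div {a b : ℝ} (ha : 0 < a) (hb : 0 < b) (hab : a ≠ b) :
    a * logMeanFun (b / a) = (b - a) / (Real.log b - Real.log a) := by
  have hba : b / a ≠ 1 := fun h => hab ((div_eq_one_iff_eq ha.ne').1 h).symm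
  have hlog : Real.log b - Real.log a ≠ 0 :=
    sub_ne_zero.2 fun h => hab (Real.log_injOn_pos ha hb h.symm)
  rw [logMeanFun, if_neg hba, Real.log_div hb.ne' ha.ne']
  field_simp

lemma wLogScalar_one_eq {v t : ℝ} (hv0 : v ≠ 0) (hv1 : v ≠ 1) (ht : 0 < t) :
    wLogScalar v 1 t =
      (1 - v) * (t ^ v * logMeanFun (1 / t ^ v)) + v * (t ^ v * logMeanFun (t / t ^ v)) := by
  rcases eq_or_ne t 1 with rfl | ht1
  · simp [wLogScalar, logMeanFun]
  have hq : 0 < t ^ v := Real.rpow_pos_of_pos ht v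
  have hlog : Real.log t ≠ 0 := Real.log_ne_zero_of_pos_of_ne_one ht ht1
  have hlogq : Real.log (t ^ v) = v * Real.log t := Real.log_rpow ht v
  have hq1 : t ^ v ≠ 1 := fun h => by simp_all
  have hqt : t ^ v ≠ t := fun h => by
    have : (v - 1) * Real.log t = 0 := by rw [sub_mul, ← hlogq, h]; ring
    simp_all
  have hv1' : 1 - v ≠ 0 := sub_ne_zero.2 hv1.symm
  rw [mul_logMeanFun_div hq one_pos hq1, mul_logMeanFun_div hq ht hqt, hlogq, Real.log_one,
    wLogScalar, if_neg (Ne.symm ht1), Real.log_one, Real.one_rpow, one_mul]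
  field_simp
  ring

lemma ContinuousOn.mul_comp_div {f g h : ℝ → ℝ} {s : Set ℝ} (hf : ContinuousOn f (Ioi 0))
    (hg : ContinuousOn g s) (hh : ContinuousOn h s) (hg0 : ∀ t ∈ s, 0 < g t)
    (hh0 : ∀ t ∈ s, 0 < h t) : ContinuousOn (fun t => g t * f (h t / g t)) s :=
  hg.mul <| hf.comp (hh.div hg fun t ht => (hg0 t ht).ne') fun t ht => div_pos (hh0 t ht) (hg0 t ht)

section CStarAlgebra

variable {A : Type*} [CStarAlgebra A]

lemma cfc_unitary_conj (f : ℝ → ℝ) (a : A) (u : unitary A) :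
    cfc f ((u : A) * a * star (u : A)) = u * cfc f a * star (u : A) := by
  let φ := Unitary.conjStarAlgAut ℝ A u
  have hφ : Continuous φ := (continuous_const.mul continuous_id).mul continuous_const
  have hspec : spectrum ℝ (φ a) = spectrum ℝ a := AlgEquiv.spectrum_eq φ a
  have hsa : IsSelfAdjoint (φ a) ↔ IsSelfAdjoint a :=
    ⟨fun h => by simpa using h.map φ.symm, fun h => h.map φ⟩
  change cfc f (φ a) = φ (cfc f a)
  by_cases ha : IsSelfAdjoint a
  · by_cases hf : ContinuousOn f (spectrum ℝ a)
    · exact (StarAlgHomClass.map_cfc φ f a hf hφ ha (hsa.2 ha)).symm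
    · rw [cfc_apply_of_not_continuousOn _ hf, cfc_apply_of_not_continuousOn _ (hspec ▸ hf),
        map_zero]
  · rw [cfc_apply_of_not_predicate _ ha, cfc_apply_of_not_predicate _ (mt hsa.1 ha), map_zero]

lemma cfc_wLogScalar_one {v : ℝ} (hv0 : v ≠ 0) (hv1 : v ≠ 1) {X : A}
    (hX : ∀ t ∈ spectrum ℝ X, 0 < t) :
    cfc (wLogScalar v 1) X =
      (1 - v) • cfc (fun t : ℝ => t ^ v * logMeanFun (1 / t ^ v)) X +
        v • cfc (fun t : ℝ => t ^ v * logMeanFun (t / t ^ v)) X := by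
  have hpow : ContinuousOn (fun t : ℝ => t ^ v) (spectrum ℝ X) :=
    continuousOn_id.rpow_const fun t ht => Or.inl (hX t ht).ne'
  have hpow0 : ∀ t ∈ spectrum ℝ X, 0 < t ^ v := fun t ht => Real.rpow_pos_of_pos (hX t ht) v
  have h₁ : ContinuousOn (fun t : ℝ => t ^ v * logMeanFun (1 / t ^ v)) (spectrum ℝ X) :=
    continuousOn_logMeanFun.mul_comp_div hpow continuousOn_const hpow0 fun _ _ => one_pos
  have h₂ : ContinuousOn (fun t : ℝ => t ^ v * logMeanFun (t / t ^ v)) (spectrum ℝ X) :=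
    continuousOn_logMeanFun.mul_comp_div hpow continuousOn_id hpow0 hX
  rw [← cfc_smul (1 - v) _ X h₁, ← cfc_smul v _ X h₂,
    ← cfc_add (a := X) _ _ (h₁.fun_const_smul _) (h₂.fun_const_smul _)]
  exact cfc_congr fun t ht => wLogScalar_one_eq hv0 hv1 (hX t ht)

variable [PartialOrder A] [StarOrderedRing A]

lemma cfc_sqrt_eq_sqrt {a : A} (ha : 0 ≤ a) : cfc Real.sqrt a = CFC.sqrt a := by
  rw [CFC.sqrt_eq_real_sqrt a ha, cfcₙ_eq_cfc]

lemma IsStrictlyPositive.cfc_sqrt {a : A} (ha : IsStrictlyPositive a) :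
    IsStrictlyPositive (cfc Real.sqrt a) :=
  cfc_sqrt_eq_sqrt ha.nonneg ▸ ha.sqrt

lemma cfc_sqrt_mul_self {a : A} (ha : 0 ≤ a) : cfc Real.sqrt a * cfc Real.sqrt a = a := by
  rw [cfc_sqrt_eq_sqrt ha, CFC.sqrt_mul_sqrt_self a ha]

end CStarAlgebra

lemma opLog_eq_opMeanOf_logMeanFun (A B : H →L[ℂ] H) : opLog A B = opMeanOf logMeanFun A B := rfl

lemma opMeanOf_mul_star_self (f : ℝ → ℝ) {C : H →L[ℂ] H} (hC : IsUnit C) (R : H →L[ℂ] H) :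
    opMeanOf f (C * star C) R = C * cfc f (C⁻¹ʳ * R * (star C)⁻¹ʳ) * star C := by
  have hP : IsStrictlyPositive (C * star C) :=
    (hC.mul hC.star).isStrictlyPositive (mul_star_self_nonneg C)
  set T := cfc Real.sqrt (C * star C)
  have hT : IsStrictlyPositive T := hP.cfc_sqrt
  have hTT : T * T = C * star C := cfc_sqrt_mul_self hP.nonneg
  have hTi_star : star T⁻¹ʳ = T⁻¹ʳ := hT.isSelfAdjoint.ringInverse.star_eq
  -- `T⁻¹ C` is the unitary part of the polar decomposition of `C`
  set U := T⁻¹ʳ * C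
  have hU_star : star U = star C * T⁻¹ʳ := by simp only [U, star_mul, hTi_star]
  have hU : U ∈ unitary (H →L[ℂ] H) := by
    refine (hT.isUnit.ringInverse.mul hC).mem_unitary_of_mul_star_self ?_
    calc U * star U = T⁻¹ʳ * (C * star C) * T⁻¹ʳ := by simp only [hU_star, U, mul_assoc]
      _ = 1 := by
        rw [← hTT, ← mul_assoc, Ring.inverse_mul_cancel _ hT.isUnit, one_mul,
          Ring.mul_inverse_cancel _ hT.isUnit]
  have hconj : T⁻¹ʳ * R * T⁻¹ʳ = U * (C⁻¹ʳ * R * (star C)⁻¹ʳ) * star U := by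
    simp only [hU_star, U, mul_assoc, Ring.mul_inverse_cancel_left _ _ hC,
      Ring.inverse_mul_cancel_left _ _ hC.star]
  calc opMeanOf f (C * star C) R = T * cfc f (U * (C⁻¹ʳ * R * (star C)⁻¹ʳ) * star U) * T := by
        rw [← hconj]; rfl
    _ = (T * U) * cfc f (C⁻¹ʳ * R * (star C)⁻¹ʳ) * (star U * T) := by
        rw [cfc_unitary_conj f _ ⟨U, hU⟩]; simp only [mul_assoc]
    _ = C * cfc f (C⁻¹ʳ * R * (star C)⁻¹ʳ) * star C := by
        rw [hU_star, Ring.mul_inverse_cancel_left _ _ hT.isUnit,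
          Ring.inverse_mul_cancel_right _ _ hT.isUnit]

lemma opMeanOf_conj (f : ℝ → ℝ) {S P : H →L[ℂ] H} (hS : IsUnit S) (hP : IsStrictlyPositive P)
    (R : H →L[ℂ] H) :
    opMeanOf f (S * P * star S) (S * R * star S) = S * opMeanOf f P R * star S := by
  set T := cfc Real.sqrt P
  have hT : IsStrictlyPositive T := hP.cfc_sqrt
  have hC : IsUnit (S * T) := hS.mul hT.isUnit
  have hC_star : star (S * T) = T * star S := by rw [star_mul, hT.isSelfAdjoint.star_eq]
  have hleft : (S * T)⁻¹ʳ * S = T⁻¹ʳ :=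
    calc (S * T)⁻¹ʳ * S = (S * T)⁻¹ʳ * (S * T) * T⁻¹ʳ := by
          rw [mul_assoc, Ring.mul_inverse_cancel_right _ _ hT.isUnit]
      _ = T⁻¹ʳ := by rw [Ring.inverse_mul_cancel _ hC, one_mul]
  have hright : star S * (star (S * T))⁻¹ʳ = T⁻¹ʳ := by
    simpa only [star_mul, star_star, ← Ring.inverse_star, hT.isSelfAdjoint.ringInverse.star_eq]
      using congrArg star hleft
  have hP_eq : S * P * star S = S * T * star (S * T) := by
    rw [hC_star, ← cfc_sqrt_mul_self hP.nonneg]; simp only [T, mul_assoc]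
  rw [hP_eq, opMeanOf_mul_star_self f hC]
  calc S * T * cfc f ((S * T)⁻¹ʳ * (S * R * star S) * (star (S * T))⁻¹ʳ) * star (S * T)
      = S * (T * cfc f (((S * T)⁻¹ʳ * S) * R * (star S * (star (S * T))⁻¹ʳ)) * T) * star S := by
        simp only [hC_star, mul_assoc]
    _ = S * opMeanOf f P R * star S := by rw [hleft, hright]; rfl

lemma opMeanOf_cfc_cfc {f : ℝ → ℝ} (g h : ℝ → ℝ) {X : H →L[ℂ] H} (hX : IsSelfAdjoint X)
    (hf : ContinuousOn f (Ioi 0)) (hg : ContinuousOn g (spectrum ℝ X))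
    (hh : ContinuousOn h (spectrum ℝ X)) (hg0 : ∀ t ∈ spectrum ℝ X, 0 < g t)
    (hh0 : ∀ t ∈ spectrum ℝ X, 0 < h t) :
    opMeanOf f (cfc g X) (cfc h X) = cfc (fun t => g t * f (h t / g t)) X := by
  have hsq0 : ∀ t ∈ spectrum ℝ X, 0 < √(g t) := fun t ht => Real.sqrt_pos.2 (hg0 t ht)
  have hsq : ContinuousOn (fun t => √(g t)) (spectrum ℝ X) := hg.sqrt
  have hisq : ContinuousOn (fun t => (√(g t))⁻¹) (spectrum ℝ X) :=
    hsq.inv₀ fun t ht => (hsq0 t ht).ne'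
  have hw : ContinuousOn (fun t => (√(g t))⁻¹ * h t * (√(g t))⁻¹) (spectrum ℝ X) :=
    (hisq.mul hh).mul hisq
  have hw0 : ∀ t ∈ spectrum ℝ X, 0 < (√(g t))⁻¹ * h t * (√(g t))⁻¹ := fun t ht => by
    have := hsq0 t ht; have := hh0 t ht; positivity
  have hfw : ContinuousOn (fun t => f ((√(g t))⁻¹ * h t * (√(g t))⁻¹)) (spectrum ℝ X) :=
    hf.comp hw hw0
  have h_sqrt : cfc Real.sqrt (cfc g X) = cfc (fun t => √(g t)) X :=
    (cfc_comp' _ _ X Real.continuous_sqrt.continuousOn hg hX).symm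
  have h_inv : (cfc (fun t => √(g t)) X)⁻¹ʳ = cfc (fun t => (√(g t))⁻¹) X :=
    (cfc_inv _ X (fun t ht => (hsq0 t ht).ne') hsq hX).symm
  have h_inner : cfc (fun t => (√(g t))⁻¹) X * cfc h X * cfc (fun t => (√(g t))⁻¹) X =
      cfc (fun t => (√(g t))⁻¹ * h t * (√(g t))⁻¹) X := by
    rw [cfc_mul _ _ X (hisq.fun_mul hh) hisq, cfc_mul _ _ X hisq hh]
  have h_f : cfc f (cfc (fun t => (√(g t))⁻¹ * h t * (√(g t))⁻¹) X) =
      cfc (fun t => f ((√(g t))⁻¹ * h t * (√(g t))⁻¹)) X :=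
    (cfc_comp' f _ X (hf.mono (image_subset_iff.2 hw0)) hw hX).symm
  rw [opMeanOf, h_sqrt, h_inv, h_inner, h_f, ← cfc_mul _ _ X hsq hfw,
    ← cfc_mul _ _ X (hsq.fun_mul hfw) hsq]
  refine cfc_congr fun t ht => ?_
  have := (hsq0 t ht).ne'
  field_simp
  rw [Real.sq_sqrt (hg0 t ht).le]

lemma opMeanOf_conj_cfc {f : ℝ → ℝ} (g h : ℝ → ℝ) {S X : H →L[ℂ] H} (hS : IsUnit S)
    (hX : IsSelfAdjoint X) (hf : ContinuousOn f (Ioi 0)) (hg : ContinuousOn g (spectrum ℝ X))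
    (hh : ContinuousOn h (spectrum ℝ X)) (hg0 : ∀ t ∈ spectrum ℝ X, 0 < g t)
    (hh0 : ∀ t ∈ spectrum ℝ X, 0 < h t) :
    opMeanOf f (S * cfc g X * star S) (S * cfc h X * star S) =
      S * cfc (fun t => g t * f (h t / g t)) X * star S := by
  rw [opMeanOf_conj f hS ((cfc_isStrictlyPositive_iff g X hg hX).2 hg0),
    opMeanOf_cfc_cfc g h hX hf hg hh hg0 hh0]

lemma exists_opMeanOf_eq_conj_cfc {A B : H →L[ℂ] H} (hA : IsStrictlyPositive A)
    (hB : IsStrictlyPositive B) :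
    ∃ S X : H →L[ℂ] H, IsUnit S ∧ IsStrictlyPositive X ∧ A = S * star S ∧
      B = S * X * star S ∧ ∀ f, opMeanOf f A B = S * cfc f X * star S := by
  have hS := hA.cfc_sqrt
  refine ⟨cfc Real.sqrt A, (cfc Real.sqrt A)⁻¹ʳ * B * (cfc Real.sqrt A)⁻¹ʳ, hS.isUnit,
    IsStrictlyPositive.conjugate_of_isUnit_of_isSelfAdjoint B _ hS.ringInverse.isUnit
      hS.ringInverse.isSelfAdjoint hB, ?_, ?_, fun f => ?_⟩ <;> rw [hS.isSelfAdjoint.star_eq]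
  · exact (cfc_sqrt_mul_self hA.nonneg).symm
  · simp only [mul_assoc, Ring.mul_inverse_cancel_left _ _ hS.isUnit,
      Ring.inverse_mul_cancel _ hS.isUnit, mul_one]
  · rfl

/-- For positive invertible operators `A, B` on a complex Hilbert space and `v ∈ (0,1)`:
`L_v(A,B) = (1-v)·L(A♯_v B, A) + v·L(A♯_v B, B)`. -/
theorem opWLog_eq_wArith_opLog (A B : H →L[ℂ] H)
    (hA : 0 ≤ A) (hB : 0 ≤ B) (hAu : IsUnit A) (hBu : IsUnit B)
    (v : ℝ) (hv : v ∈ Set.Ioo (0 : ℝ) 1) :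
    opWLog v A B =
      (1 - v : ℝ) • opLog (opWGeom v A B) A + v • opLog (opWGeom v A B) B := by
  obtain ⟨S, X, hS, hX, rfl, rfl, hm⟩ :=
    exists_opMeanOf_eq_conj_cfc (hAu.isStrictlyPositive hA) (hBu.isStrictlyPositive hB)
  have hX0 : ∀ t ∈ spectrum ℝ X, 0 < t := fun t ht => hX.spectrum_pos ht
  have hpow : ContinuousOn (fun t : ℝ => t ^ v) (spectrum ℝ X) :=
    (Real.continuous_rpow_const hv.1.le).continuousOn
  have hpow0 : ∀ t ∈ spectrum ℝ X, 0 < t ^ v := fun t ht => Real.rpow_pos_of_pos (hX0 t ht) v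
  have hA_eq : S * star S = S * cfc (fun _ : ℝ => (1 : ℝ)) X * star S := by
    rw [cfc_const_one ℝ X hX.isSelfAdjoint, mul_one]
  have hB_eq : S * X * star S = S * cfc (id : ℝ → ℝ) X * star S := by
    rw [cfc_id ℝ X hX.isSelfAdjoint]
  rw [opWLog, hm, cfc_wLogScalar_one hv.1.ne' hv.2.ne hX0, opWGeom, hm,
    opLog_eq_opMeanOf_logMeanFun, opLog_eq_opMeanOf_logMeanFun, hA_eq, hB_eq,
    opMeanOf_conj_cfc _ _ hS hX.isSelfAdjoint continuousOn_logMeanFun hpow continuousOn_const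
      hpow0 fun _ _ => one_pos,
    opMeanOf_conj_cfc _ _ hS hX.isSelfAdjoint continuousOn_logMeanFun hpow continuousOn_id
      hpow0 hX0]
  simp only [mul_add, add_mul, smul_mul_assoc, mul_smul_comm, id]
end

section
/- Let p, q be real numbers with p ≠ 0, q ≠ 0, p ≠ q, let v ∈ (0,1), and let a, b > 0 with a ≠ b (and additionally B_{p;v}(a,b) distinct from a and from b). Then B_{q−p;v}( S_{p,q}(B_{p;v}(a,b), a), S_{p,q}(B_{p;v}(a,b), b) ) = [ (p/q)·(1/(b^p − a^p))·( ((1−v)/v)·(B_{p;v}(a,b)^q − a^q) + (v/(1−v))·(b^q − B_{p;v}(a,b)^q) ) ]^{1/(q−p)}. -/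
/-! Both Stolarsky means share the first argument `B = B_{p;v}(a,b)`, and for `x ≠ y` the power
`S_{p,q}(x,y)^{q-p}` is the ratio `(p/q)(y^q - x^q)/(y^p - x^p)` itself, because that ratio of two
difference quotients `(y^r - x^r)/r`, each with the sign of `y - x`, is positive. So the outer mean
raised to the power `q - p` is a weighted sum of two such ratios, whose denominators
`a^p - B^p = -v(b^p - a^p)` and `b^p - B^p = (1-v)(b^p - a^p)` share the factor `b^p - a^p`. -/

/-- The weighted power binomial mean `B_{r;v}(a,b) = ((1-v)a^r + v b^r)^{1/r}` for `r ≠ 0`,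
with `B_{0;v}(a,b) = a^{1-v} b^v`. -/
noncomputable def powBinom (r v a b : ℝ) : ℝ :=
  if r = 0 then a ^ (1 - v) * b ^ v else ((1 - v) * a ^ r + v * b ^ r) ^ r⁻¹

/-- The Stolarsky mean `S_{p,q}(a,b) = ((p/q)·(b^q - a^q)/(b^p - a^p))^{1/(q-p)}` for `a ≠ b`,
with `S_{p,q}(a,a) = a`. -/
noncomputable def stolarsky (p q a b : ℝ) : ℝ :=
  if a = b then a else ((p / q) * (b ^ q - a ^ q) / (b ^ p - a ^ p)) ^ (q - p)⁻¹

open Real Set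

lemma rpow_sub_rpow_div_pos {r x y : ℝ} (hr : r ≠ 0) (hx : 0 < x) (hxy : x < y) :
    0 < (y ^ r - x ^ r) / r := by
  rcases hr.lt_or_gt with hr | hr
  · exact div_pos_of_neg_of_neg (sub_neg.2 (rpow_lt_rpow_of_neg hx hxy hr)) hr
  · exact div_pos (sub_pos.2 (rpow_lt_rpow hx.le hxy hr)) hr

lemma stolarsky_base_pos {p q x y : ℝ} (hp : p ≠ 0) (hq : q ≠ 0) (hx : 0 < x) (hy : 0 < y)
    (hxy : x ≠ y) : 0 < p / q * (y ^ q - x ^ q) / (y ^ p - x ^ p) := by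
  wlog hlt : x < y generalizing x y
  · have := this hy hx hxy.symm (hxy.lt_or_gt.resolve_left hlt)
    rwa [← neg_sub (y ^ q), ← neg_sub (y ^ p), mul_neg, neg_div_neg_eq] at this
  have hquot : p / q * (y ^ q - x ^ q) / (y ^ p - x ^ p)
      = (y ^ q - x ^ q) / q / ((y ^ p - x ^ p) / p) := by
    rw [div_div_eq_mul_div]; ring
  rw [hquot]
  exact div_pos (rpow_sub_rpow_div_pos hq hx hlt) (rpow_sub_rpow_div_pos hp hx hlt)

lemma stolarsky_rpow_sub {p q x y : ℝ} (hp : p ≠ 0) (hq : q ≠ 0) (hpq : p ≠ q) (hx : 0 < x)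
    (hy : 0 < y) (hxy : x ≠ y) :
    stolarsky p q x y ^ (q - p) = p / q * (y ^ q - x ^ q) / (y ^ p - x ^ p) := by
  rw [stolarsky, if_neg hxy,
    rpow_inv_rpow (stolarsky_base_pos hp hq hx hy hxy).le (sub_ne_zero.2 hpq.symm)]

lemma powBinom_of_ne_zero {r : ℝ} (hr : r ≠ 0) (v a b : ℝ) :
    powBinom r v a b = ((1 - v) * a ^ r + v * b ^ r) ^ r⁻¹ :=
  if_neg hr

lemma weighted_rpow_sum_pos {r v a b : ℝ} (hv : v ∈ Icc (0 : ℝ) 1) (ha : 0 < a) (hb : 0 < b) :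
    0 < (1 - v) * a ^ r + v * b ^ r := by
  have ha' := rpow_pos_of_pos ha r
  have hb' := rpow_pos_of_pos hb r
  rcases hv.2.lt_or_eq with hv1 | rfl
  · exact add_pos_of_pos_of_nonneg (mul_pos (sub_pos.2 hv1) ha') (mul_nonneg hv.1 hb'.le)
  · simpa using hb'

lemma powBinom_pos {r v a b : ℝ} (hr : r ≠ 0) (hv : v ∈ Icc (0 : ℝ) 1) (ha : 0 < a)
    (hb : 0 < b) : 0 < powBinom r v a b := by
  rw [powBinom_of_ne_zero hr]
  exact rpow_pos_of_pos (weighted_rpow_sum_pos hv ha hb) _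

lemma powBinom_rpow_self {r v a b : ℝ} (hr : r ≠ 0) (hv : v ∈ Icc (0 : ℝ) 1) (ha : 0 < a)
    (hb : 0 < b) : powBinom r v a b ^ r = (1 - v) * a ^ r + v * b ^ r := by
  rw [powBinom_of_ne_zero hr, rpow_inv_rpow (weighted_rpow_sum_pos hv ha hb).le hr]

theorem stolarsky_weighted_explicit_general (p q v a b : ℝ)
    (hp : p ≠ 0) (hq : q ≠ 0) (hpq : p ≠ q) (hv : v ∈ Set.Ioo (0 : ℝ) 1)
    (ha : 0 < a) (hb : 0 < b)
    (hBa : powBinom p v a b ≠ a) (hBb : powBinom p v a b ≠ b) :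
    powBinom (q - p) v (stolarsky p q (powBinom p v a b) a)
        (stolarsky p q (powBinom p v a b) b) =
      ((p / q) * (1 / (b ^ p - a ^ p)) *
          (((1 - v) / v) * ((powBinom p v a b) ^ q - a ^ q) +
            (v / (1 - v)) * (b ^ q - (powBinom p v a b) ^ q))) ^ (q - p)⁻¹ := by
  set B := powBinom p v a b
  have hB : 0 < B := powBinom_pos hp (Ioo_subset_Icc_self hv) ha hb
  have hBp : B ^ p = (1 - v) * a ^ p + v * b ^ p :=
    powBinom_rpow_self hp (Ioo_subset_Icc_self hv) ha hb
  rw [powBinom_of_ne_zero (sub_ne_zero.2 hpq.symm), stolarsky_rpow_sub hp hq hpq hB ha hBa,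
    stolarsky_rpow_sub hp hq hpq hB hb hBb]
  have hpow_a : a ^ p - B ^ p = -v * (b ^ p - a ^ p) := by rw [hBp]; ring
  have hpow_b : b ^ p - B ^ p = (1 - v) * (b ^ p - a ^ p) := by rw [hBp]; ring
  rw [hpow_a, hpow_b]
  congr 1
  -- with `D` and `w` opaque this is a field identity, valid even at `D = 0` since `x / 0 = 0`
  generalize b ^ p - a ^ p = D
  generalize 1 - v = w
  ring

/-- Explicit form of the `S_{p,q}`-weighted mean
`B_{q-p;v}(S_{p,q}(B_{p;v}(a,b), a), S_{p,q}(B_{p;v}(a,b), b))`. -/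
theorem stolarsky_weighted_explicit (p q v a b : ℝ)
    (hp : p ≠ 0) (hq : q ≠ 0) (hpq : p ≠ q) (hv : v ∈ Set.Ioo (0 : ℝ) 1)
    (ha : 0 < a) (hb : 0 < b) (hab : a ≠ b)
    (hBa : powBinom p v a b ≠ a) (hBb : powBinom p v a b ≠ b) :
    powBinom (q - p) v (stolarsky p q (powBinom p v a b) a)
        (stolarsky p q (powBinom p v a b) b) =
      ((p / q) * (1 / (b ^ p - a ^ p)) *
          (((1 - v) / v) * ((powBinom p v a b) ^ q - a ^ q) +
            (v / (1 - v)) * (b ^ q - (powBinom p v a b) ^ q))) ^ (q - p)⁻¹ :=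
  stolarsky_weighted_explicit_general p q v a b hp hq hpq hv ha hb hBa hBb
end
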